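/- arXiv:1407.5841 — 6 statements merged into one kernel-verified Lean document; each statement's English description precedes it below -/
import Mathlib

section
/- Every non-negative integer n can be represented uniquely as a sum of distinct Tribonacci numbers T_i with indices i ≥ 2, subject to the constraint that no three consecutive Tribonacci numbers appear in the sum. -/
/-- The Tribonacci morphism: 0 → 01, 1 → 02, 2 → 0. -/
def tribMap (c : ℕ) : List ℕ := if c = 0 then [0,1] else if c = 1 then [0,2] else [0]

/-- Iterates of the Tribonacci morphism on the word `0`. -/
def tribIter : ℕ → List ℕ
  | 0 => [0]
  | k+1 => (tribIter k).flatMap tribMap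

/-- The infinite Tribonacci word, the fixed point starting with 0 of 0→01, 1→02, 2→0. -/
def tribWord (n : ℕ) : ℕ := (tribIter (n+1)).getD n 0

/-- The Tribonacci numbers. -/
def trib : ℕ → ℕ
  | 0 => 0
  | 1 => 1
  | 2 => 1
  | n+3 => trib (n+2) + trib (n+1) + trib n

lemma trib_pos : ∀ n, 1 ≤ n → 0 < trib n
  | 1, _ => by decide
  | 2, _ => by decide
  | (m+3), _ => by
    have := trib_pos (m+2) (by omega)
    show 0 < trib (m+2) + trib (m+1) + trib m
    omega

lemma trib_le_succ : ∀ n, trib n ≤ trib (n+1)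
  | 0 => by decide
  | 1 => by decide
  | 2 => by decide
  | (m+3) => by
    show trib (m+3) ≤ trib (m+3) + trib (m+2) + trib (m+1)
    omega

lemma trib_mono : Monotone trib := monotone_nat_of_le_succ trib_le_succ

lemma trib_rec (k : ℕ) (h : 2 ≤ k) : trib (k+1) = trib k + trib (k-1) + trib (k-2) := by
  obtain ⟨m, rfl⟩ : ∃ m, k = m + 2 := ⟨k - 2, by omega⟩
  rfl

lemma trib_add_le : ∀ k, 2 ≤ k → trib (k-1) + trib (k-2) ≤ trib k
  | 2, _ => by decide
  | 3, _ => by decide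
  | (m+4), _ => by
    show trib (m+3) + trib (m+2) ≤ trib (m+3) + trib (m+2) + trib (m+1)
    omega

lemma trib_ge : ∀ n, n + 1 ≤ trib (n+2)
  | 0 => by decide
  | 1 => by decide
  | (m+2) => by
    have h1 : m + 2 ≤ trib (m+3) := trib_ge (m+1)
    have h2 := trib_pos (m+2) (by omega)
    show m + 3 ≤ trib (m+3) + trib (m+2) + trib (m+1)
    omega

lemma triple_subset_iff (i : ℕ) (S : Finset ℕ) :
    ({i, i+1, i+2} : Finset ℕ) ⊆ S ↔ i ∈ S ∧ i+1 ∈ S ∧ i+2 ∈ S := by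
  simp [Finset.insert_subset_iff]

/-- Key bound: a valid representation with indices ≤ k sums to less than T_{k+1}. -/
lemma sum_lt_trib : ∀ k (S : Finset ℕ), (∀ i ∈ S, 2 ≤ i) →
    (∀ i, ¬ ({i, i+1, i+2} : Finset ℕ) ⊆ S) → (∀ i ∈ S, i ≤ k) →
    ∑ i ∈ S, trib i < trib (k+1) := by
  intro k
  induction k using Nat.strong_induction_on with
  | _ k IH =>
    intro S h2 h3 hk
    rcases eq_or_ne S ∅ with rfl | hne
    · simpa using trib_pos (k+1) (by omega)
    · have hSne : S.Nonempty := Finset.nonempty_iff_ne_empty.mpr hne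
      have hk2 : 2 ≤ k := le_trans (h2 _ hSne.choose_spec) (hk _ hSne.choose_spec)
      by_cases hkS : k ∈ S
      · by_cases hk1S : k - 1 ∈ S
        · -- k and k-1 in S, so k-2 not in S
          have hk3 : 3 ≤ k := by have := h2 _ hk1S; omega
          have hk2S : k - 2 ∉ S := by
            intro hmem
            exact h3 (k-2) ((triple_subset_iff _ _).mpr
              ⟨hmem, by rw [show k-2+1 = k-1 by omega]; exact hk1S,
               by rw [show k-2+2 = k by omega]; exact hkS⟩)
          set S2 := (S.erase k).erase (k-1) with hS2
          have hsub : S2 ⊆ S := (Finset.erase_subset _ _).trans (Finset.erase_subset _ _)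
          have hb : ∀ i ∈ S2, i ≤ k - 3 := by
            intro i hi
            have h1 : i ≠ k - 1 := Finset.ne_of_mem_erase hi
            have h2' : i ≠ k := Finset.ne_of_mem_erase (Finset.mem_of_mem_erase hi)
            have h3' : i ≠ k - 2 := fun h => hk2S (h ▸ hsub hi)
            have := hk i (hsub hi)
            omega
          have hlt : ∑ i ∈ S2, trib i < trib (k-3+1) :=
            IH (k-3) (by omega) S2 (fun i hi => h2 i (hsub hi))
              (fun i hi => h3 i (hi.trans hsub)) hb
          have e1 : trib (k-1) + ∑ i ∈ S2, trib i = ∑ i ∈ S.erase k, trib i :=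
            Finset.add_sum_erase _ _ (Finset.mem_erase.mpr ⟨by omega, hk1S⟩)
          have e2 : trib k + ∑ i ∈ S.erase k, trib i = ∑ i ∈ S, trib i :=
            Finset.add_sum_erase _ _ hkS
          rw [trib_rec k (by omega)]
          have : trib (k-3+1) = trib (k-2) := by congr 1; omega
          omega
        · -- k in S, k-1 not
          set S1 := S.erase k with hS1
          have hsub : S1 ⊆ S := Finset.erase_subset _ _
          have hb : ∀ i ∈ S1, i ≤ k - 2 := by
            intro i hi
            have h1 : i ≠ k := Finset.ne_of_mem_erase hi
            have h2' : i ≠ k - 1 := fun h => hk1S (h ▸ hsub hi)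
            have := hk i (hsub hi)
            omega
          have hlt : ∑ i ∈ S1, trib i < trib (k-2+1) :=
            IH (k-2) (by omega) S1 (fun i hi => h2 i (hsub hi))
              (fun i hi => h3 i (hi.trans hsub)) hb
          have e2 : trib k + ∑ i ∈ S1, trib i = ∑ i ∈ S, trib i :=
            Finset.add_sum_erase _ _ hkS
          rw [trib_rec k (by omega)]
          have : trib (k-2+1) = trib (k-1) := by congr 1; omega
          omega
      · -- k not in S
        have hb : ∀ i ∈ S, i ≤ k - 1 := by
          intro i hi
          have := hk i hi
          have : i ≠ k := fun h => hkS (h ▸ hi)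
          omega
        have hlt : ∑ i ∈ S, trib i < trib (k-1+1) := IH (k-1) (by omega) S h2 h3 hb
        have : trib (k-1+1) ≤ trib (k+1) := trib_mono (by omega)
        omega

/-- Existence of representations. -/
lemma trib_exists : ∀ n : ℕ, ∃ S : Finset ℕ, (∀ i ∈ S, 2 ≤ i) ∧
    (∀ i, ¬ ({i, i+1, i+2} : Finset ℕ) ⊆ S) ∧ n = ∑ i ∈ S, trib i := by
  intro n
  induction n using Nat.strong_induction_on with
  | _ n IH =>
    rcases Nat.eq_zero_or_pos n with rfl | hn
    · exact ⟨∅, by simp⟩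
    · set k := Nat.findGreatest (fun i => trib i ≤ n) (n+2) with hkdef
      have hk2 : 2 ≤ k := Nat.le_findGreatest (m := 2) (by omega) (by show trib 2 ≤ n; exact hn)
      have hkle : trib k ≤ n := Nat.findGreatest_spec (P := fun i => trib i ≤ n) (m := 2) (by omega)
        (by show trib 2 ≤ n; exact hn)
      have hkub : k ≤ n + 1 := by
        by_contra h
        have hk' : k = n + 2 := le_antisymm (Nat.findGreatest_le _) (by omega)
        rw [hk'] at hkle
        have := trib_ge n
        omega
      have hgt : n < trib (k+1) := by
        by_contra h
        exact Nat.findGreatest_is_greatest (lt_add_one k) (by omega) (by omega)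
      set m := n - trib k with hm
      have hmlt : m < n := by have := trib_pos k (by omega); omega
      obtain ⟨S', hS'2, hS'3, hS'sum⟩ := IH m hmlt
      have hm2 : m < trib (k-1) + trib (k-2) := by
        rw [trib_rec k hk2] at hgt; omega
      have hmk : m < trib k := lt_of_lt_of_le hm2 (trib_add_le k hk2)
      have hbound : ∀ j ∈ S', j < k := by
        intro j hj
        by_contra h
        have h1 : trib j ≤ m := hS'sum ▸ Finset.single_le_sum (f := trib) (by intros; omega) hj
        have h2 : trib k ≤ trib j := trib_mono (by omega)
        omega
      have hkS' : k ∉ S' := fun h => lt_irrefl k (hbound k h)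
      have hpair : ¬ (k - 1 ∈ S' ∧ k - 2 ∈ S') := by
        rintro ⟨ha, hb⟩
        have hne : (k:ℕ) - 2 ≠ k - 1 := by
          have := hS'2 _ ha; omega
        have hsub : ({k-2, k-1} : Finset ℕ) ⊆ S' := by
          intro x hx; simp at hx; rcases hx with rfl | rfl <;> assumption
        have := Finset.sum_le_sum_of_subset (f := trib) hsub
        rw [Finset.sum_pair hne, ← hS'sum] at this
        omega
      refine ⟨insert k S', ?_, ?_, ?_⟩
      · intro i hi
        rcases Finset.mem_insert.mp hi with rfl | hi
        · omega
        · exact hS'2 i hi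
      · intro i hsub
        rw [triple_subset_iff] at hsub
        obtain ⟨ha, hb, hc⟩ := hsub
        rcases Finset.mem_insert.mp hc with hc | hc
        · -- i+2 = k
          have ha' : i ∈ S' := by
            rcases Finset.mem_insert.mp ha with rfl | h
            · omega
            · exact h
          have hb' : i+1 ∈ S' := by
            rcases Finset.mem_insert.mp hb with h | h
            · omega
            · exact h
          exact hpair ⟨by rw [show k - 1 = i + 1 by omega]; exact hb',
            by rw [show k - 2 = i by omega]; exact ha'⟩
        · -- i+2 ∈ S', so i+2 < k, all three in S'
          have h2k := hbound _ hc
          have ha' : i ∈ S' := by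
            rcases Finset.mem_insert.mp ha with rfl | h
            · omega
            · exact h
          have hb' : i+1 ∈ S' := by
            rcases Finset.mem_insert.mp hb with h | h
            · omega
            · exact h
          exact hS'3 i ((triple_subset_iff _ _).mpr ⟨ha', hb', hc⟩)
      · rw [Finset.sum_insert hkS', ← hS'sum]
        omega

/-- Uniqueness of representations. -/
lemma trib_unique : ∀ n : ℕ, ∀ S T : Finset ℕ,
    (∀ i ∈ S, 2 ≤ i) → (∀ i, ¬ ({i, i+1, i+2} : Finset ℕ) ⊆ S) →
    (∀ i ∈ T, 2 ≤ i) → (∀ i, ¬ ({i, i+1, i+2} : Finset ℕ) ⊆ T) →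
    (∑ i ∈ S, trib i = n) → (∑ i ∈ T, trib i = n) → S = T := by
  intro n
  induction n using Nat.strong_induction_on with
  | _ n IH =>
    intro S T hS2 hS3 hT2 hT3 hSsum hTsum
    rcases Nat.eq_zero_or_pos n with rfl | hn
    · have hS : S = ∅ := by
        by_contra h
        obtain ⟨a, ha⟩ := Finset.nonempty_iff_ne_empty.mpr h
        have h1 : trib a ≤ 0 := hSsum ▸ Finset.single_le_sum (f := trib) (by intros; omega) ha
        have := trib_pos a (by have := hS2 a ha; omega)
        omega
      have hT : T = ∅ := by
        by_contra h
        obtain ⟨a, ha⟩ := Finset.nonempty_iff_ne_empty.mpr h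
        have h1 : trib a ≤ 0 := hTsum ▸ Finset.single_le_sum (f := trib) (by intros; omega) ha
        have := trib_pos a (by have := hT2 a ha; omega)
        omega
      rw [hS, hT]
    · have hSne : S.Nonempty := by
        rcases S.eq_empty_or_nonempty with rfl | h
        · simp at hSsum; omega
        · exact h
      have hTne : T.Nonempty := by
        rcases T.eq_empty_or_nonempty with rfl | h
        · simp at hTsum; omega
        · exact h
      set a := S.max' hSne with ha
      set b := T.max' hTne with hb
      have haS : a ∈ S := S.max'_mem hSne
      have hbT : b ∈ T := T.max'_mem hTne
      have hSlt : n < trib (a+1) :=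
        hSsum ▸ sum_lt_trib a S hS2 hS3 (fun i hi => S.le_max' i hi)
      have hTlt : n < trib (b+1) :=
        hTsum ▸ sum_lt_trib b T hT2 hT3 (fun i hi => T.le_max' i hi)
      have haLe : trib a ≤ n := hSsum ▸ Finset.single_le_sum (f := trib) (by intros; omega) haS
      have hbLe : trib b ≤ n := hTsum ▸ Finset.single_le_sum (f := trib) (by intros; omega) hbT
      have hab : a = b := by
        rcases lt_trichotomy a b with h | h | h
        · have : trib (a+1) ≤ trib b := trib_mono (by omega)
          omega
        · exact h
        · have : trib (b+1) ≤ trib a := trib_mono (by omega)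
          omega
      rw [← hab] at hbT
      have e1 : trib a + ∑ i ∈ S.erase a, trib i = n := by
        rw [Finset.add_sum_erase _ _ haS]; exact hSsum
      have e2 : trib a + ∑ i ∈ T.erase a, trib i = n := by
        rw [Finset.add_sum_erase _ _ hbT]; exact hTsum
      have hpos := trib_pos a (by have := hS2 a haS; omega)
      have heq : S.erase a = T.erase a := by
        apply IH (n - trib a) (by omega)
        · exact fun i hi => hS2 i (Finset.mem_of_mem_erase hi)
        · exact fun i hi => hS3 i (hi.trans (Finset.erase_subset _ _))
        · exact fun i hi => hT2 i (Finset.mem_of_mem_erase hi)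
        · exact fun i hi => hT3 i (hi.trans (Finset.erase_subset _ _))
        · omega
        · omega
      calc S = insert a (S.erase a) := (Finset.insert_erase haS).symm
        _ = insert a (T.erase a) := by rw [heq]
        _ = T := Finset.insert_erase hbT

/-- Zeckendorf-type theorem for Tribonacci numbers: every natural number is uniquely
a sum of Tribonacci numbers `T_i` with `i ≥ 2` having no three consecutive indices. -/
theorem tribonacci_representation_unique (n : ℕ) :
    ∃! S : Finset ℕ, (∀ i ∈ S, 2 ≤ i) ∧ (∀ i, ¬ ({i, i+1, i+2} : Finset ℕ) ⊆ S) ∧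
      n = ∑ i ∈ S, trib i := by
  obtain ⟨S, h1, h2, h3⟩ := trib_exists n
  refine ⟨S, ⟨h1, h2, h3⟩, ?_⟩
  rintro T ⟨g1, g2, g3⟩
  exact trib_unique n T S g1 g2 h1 h2 g3.symm h3.symm
end

section
/- The infinite Tribonacci word T is not ultimately periodic: there do not exist p ≥ 1 and N such that T[i] = T[i+p] for all i ≥ N. -/
open Filter

lemma exists_abs_le_of_periodic_from {β : Type*} [AddCommGroup β] [LinearOrder β]
    [IsOrderedAddMonoid β] {g : ℕ → β} {p N : ℕ} (hp : 0 < p)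
    (h : ∀ n ≥ N, g (n + p) = g n) :
    ∃ B, ∀ n ≥ N, |g n| ≤ B := by
  have hper : Function.Periodic (fun m => g (N + m)) p := fun m => by
    simpa only [add_assoc] using h (N + m) (Nat.le_add_right N m)
  refine ⟨∑ r ∈ Finset.range p, |g (N + r)|, fun n hn => ?_⟩
  obtain ⟨m, rfl⟩ := Nat.exists_eq_add_of_le hn
  rw [← hper.map_mod_nat m]
  exact Finset.single_le_sum (f := fun r => |g (N + r)|) (fun r _ => abs_nonneg _)
    (Finset.mem_range.2 (Nat.mod_lt m hp))

section PrefixCount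

variable {α : Type*} [DecidableEq α]

def prefixCount (f : ℕ → α) (a : α) (n : ℕ) : ℕ := ((List.range n).map f).count a

lemma prefixCount_succ (f : ℕ → α) (a : α) (n : ℕ) :
    prefixCount f a (n + 1) = prefixCount f a n + if f n = a then 1 else 0 := by
  simp [prefixCount, List.range_succ, List.count_singleton]

lemma prefixCount_mono (f : ℕ → α) (a : α) : Monotone (prefixCount f a) :=
  monotone_nat_of_le_succ fun n => by rw [prefixCount_succ]; omega

lemma prefixCount_add_period {f : ℕ → α} {p N : ℕ} (h : ∀ n ≥ N, f (n + p) = f n)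
    (a : α) {n : ℕ} (hn : N ≤ n) :
    prefixCount f a (n + p) + prefixCount f a N =
      prefixCount f a n + prefixCount f a (N + p) := by
  induction n, hn using Nat.le_induction with
  | base => ring
  | succ n hn ih => rw [Nat.add_right_comm, prefixCount_succ, prefixCount_succ, h n hn]; omega

lemma exists_abs_mul_prefixCount_sub_le {f : ℕ → α} {p N : ℕ} (hp : 0 < p)
    (h : ∀ n ≥ N, f (n + p) = f n) (a : α) :
    ∃ (c : ℕ) (B : ℤ), ∀ n ≥ N, |(p * prefixCount f a n : ℤ) - c * n| ≤ B := by
  obtain ⟨c, hc⟩ := Nat.exists_eq_add_of_le (prefixCount_mono f a (Nat.le_add_right N p))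
  refine ⟨c, exists_abs_le_of_periodic_from hp fun n hn => ?_⟩
  have hstep : prefixCount f a (n + p) = prefixCount f a n + c := by
    have := prefixCount_add_period h a hn
    omega
  push_cast [hstep]
  ring

end PrefixCount

lemma length_flatMap_tribMap (l : List ℕ) :
    (l.flatMap tribMap).length = l.length + l.count 0 + l.count 1 := by
  induction l with
  | nil => rfl
  | cons c t ih =>
    simp only [List.flatMap_cons, List.length_append, ih, List.length_cons, List.count_cons,
      tribMap]
    split_ifs <;> simp_all <;> omega

lemma count_zero_flatMap_tribMap (l : List ℕ) : (l.flatMap tribMap).count 0 = l.length := by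
  induction l with
  | nil => rfl
  | cons c t ih =>
    simp only [List.flatMap_cons, List.count_append, ih, List.length_cons, tribMap]
    split_ifs <;> simp [add_comm]

lemma count_one_flatMap_tribMap (l : List ℕ) : (l.flatMap tribMap).count 1 = l.count 0 := by
  induction l with
  | nil => rfl
  | cons c t ih =>
    simp only [List.flatMap_cons, List.count_append, ih, List.count_cons, tribMap]
    split_ifs <;> simp_all [add_comm]

lemma tribIter_prefix_succ (k : ℕ) : tribIter k <+: tribIter (k + 1) := by
  induction k with
  | zero => exact ⟨[1], rfl⟩
  | succ k ih => exact ih.flatMap tribMap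

lemma tribIter_prefix {m n : ℕ} (h : m ≤ n) : tribIter m <+: tribIter n := by
  induction n, h using Nat.le_induction with
  | base => exact List.prefix_refl _
  | succ n _ ih => exact ih.trans (tribIter_prefix_succ n)

def tribLen (k : ℕ) : ℕ := (tribIter k).length

lemma tribLen_add_three (k : ℕ) :
    tribLen (k + 3) = tribLen (k + 2) + tribLen (k + 1) + tribLen k := by
  simp only [tribLen, tribIter, length_flatMap_tribMap, count_zero_flatMap_tribMap,
    count_one_flatMap_tribMap]

lemma tribLen_strictMono : StrictMono tribLen := by
  refine strictMono_nat_of_lt_succ fun k => ?_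
  have h0 : 0 ∈ tribIter k := (tribIter_prefix k.zero_le).subset (List.mem_singleton_self 0)
  have hpos : 0 < (tribIter k).count 0 := List.count_pos_iff.2 h0
  simp only [tribLen, tribIter, length_flatMap_tribMap]
  omega

lemma List.IsPrefix.getD_eq {α : Type*} {s t : List α} (h : s <+: t) {n : ℕ}
    (hn : n < s.length) (d : α) : s.getD n d = t.getD n d := by
  rw [List.getD_eq_getElem _ _ hn, List.getD_eq_getElem _ _ (hn.trans_le h.length_le),
    h.getElem hn]

lemma tribWord_eq_getD {m n : ℕ} (hn : n < tribLen m) : tribWord n = (tribIter m).getD n 0 := by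
  have hn' : n < tribLen (n + 1) := tribLen_strictMono.id_le (n + 1)
  rcases le_total (n + 1) m with h | h
  · exact (tribIter_prefix h).getD_eq hn' 0
  · exact ((tribIter_prefix h).getD_eq hn 0).symm

lemma map_tribWord_range_tribLen (m : ℕ) : (List.range (tribLen m)).map tribWord = tribIter m :=
  List.ext_getElem (by simp [tribLen]) fun n _ hn => by
    rw [List.getElem_map, List.getElem_range, tribWord_eq_getD hn, List.getD_eq_getElem _ _ hn]

lemma prefixCount_tribWord_tribLen (k : ℕ) :
    prefixCount tribWord 0 (tribLen (k + 1)) = tribLen k := by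
  rw [prefixCount, map_tribWord_range_tribLen, tribIter, count_zero_flatMap_tribMap, tribLen]

lemma cube_ne_of_pos {p : ℕ} (hp : 0 < p) (c : ℕ) :
    p ^ 3 ≠ c * p ^ 2 + c ^ 2 * p + c ^ 3 := by
  intro h
  obtain ⟨g, a, b, hg, hab, rfl, rfl⟩ := Nat.exists_coprime' (Nat.gcd_pos_of_pos_left c hp)
  have key : a ^ 3 = b * (a ^ 2 + a * b + b ^ 2) := by
    refine Nat.eq_of_mul_eq_mul_left (pow_pos hg 3) ?_
    linear_combination h
  obtain rfl : b = 1 := (hab.pow_left 3).symm.eq_one_of_dvd ⟨_, key⟩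
  rcases a with _ | _ | a
  · simp at hp
  · norm_num at key
  · nlinarith

lemma cube_eq_of_bounded {L : ℕ → ℤ} (hrec : ∀ k, L (k + 3) = L (k + 2) + L (k + 1) + L k)
    (hL : Tendsto L atTop atTop) {p c B : ℤ}
    (he : ∀ᶠ k in atTop, |p * L k - c * L (k + 1)| ≤ B) :
    p ^ 3 = c * p ^ 2 + c ^ 2 * p + c ^ 3 := by
  set D := p ^ 3 - c * p ^ 2 - c ^ 2 * p - c ^ 3
  set e : ℕ → ℤ := fun k => p * L k - c * L (k + 1)
  have hcomb : ∀ k, D * L k =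
      (p ^ 2 - c * p - c ^ 2) * e k + (c * p - c ^ 2) * e (k + 1) + c ^ 2 * e (k + 2) :=
    fun k => by linear_combination c ^ 3 * hrec k
  have hbound : ∀ᶠ k in atTop,
      |D * L k| ≤ (|p ^ 2 - c * p - c ^ 2| + |c * p - c ^ 2| + |c ^ 2|) * B := by
    filter_upwards [he, (tendsto_add_atTop_nat 1).eventually he,
      (tendsto_add_atTop_nat 2).eventually he] with k h₀ h₁ h₂
    rw [hcomb]
    refine (abs_add_three _ _ _).trans ?_
    simp only [abs_mul, add_mul]
    gcongr
  by_contra hne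
  have hD : D ≠ 0 := fun h => hne (by linear_combination h)
  have hgrow : Tendsto (fun k => |D * L k|) atTop atTop := by
    refine tendsto_atTop_mono (fun k => (le_abs_self (L k)).trans ?_) hL
    rw [abs_mul]
    exact le_mul_of_one_le_left (abs_nonneg _) (Int.one_le_abs hD)
  obtain ⟨k, hk, hk'⟩ := ((hgrow.eventually_gt_atTop _).and hbound).exists
  exact hk.not_ge hk'

/-- The Tribonacci word is not ultimately periodic. -/
theorem tribWord_not_ultimately_periodic :
    ¬ ∃ p : ℕ, 1 ≤ p ∧ ∃ N : ℕ, ∀ i ≥ N, tribWord i = tribWord (i + p) := by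
  rintro ⟨p, hp, N, hper⟩
  obtain ⟨c, B, hB⟩ := exists_abs_mul_prefixCount_sub_le hp (fun i hi => (hper i hi).symm) 0
  have he : ∀ᶠ k in atTop, |(p : ℤ) * tribLen k - c * tribLen (k + 1)| ≤ B := by
    filter_upwards [eventually_ge_atTop N] with k hk
    simpa only [prefixCount_tribWord_tribLen] using
      hB _ ((hk.trans k.le_succ).trans (tribLen_strictMono.id_le (k + 1)))
  have hcube := cube_eq_of_bounded (L := fun k => (tribLen k : ℤ))
    (fun k => by exact_mod_cast tribLen_add_three k)
    (tendsto_natCast_atTop_atTop.comp tribLen_strictMono.tendsto_atTop) he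
  exact cube_ne_of_pos hp c (by exact_mod_cast hcube)
end

section
/- The infinite Tribonacci word T contains no fourth powers: there is no position i and length n > 0 such that T[i+t] = T[i+n+t] for all t with 0 ≤ t < 3n. -/
namespace TribAux

lemma tribMap_len_pos (c : ℕ) : 0 < (tribMap c).length := by
  unfold tribMap; split <;> [simp; split <;> simp]

lemma tribMap_len_le (c : ℕ) : (tribMap c).length ≤ 2 := by
  unfold tribMap; split <;> [simp; split <;> simp]

lemma tribMap_getD_zero (c : ℕ) : (tribMap c).getD 0 0 = 0 := by
  unfold tribMap; split <;> [simp; split <;> simp]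

lemma flatMap_len_ge (l : List ℕ) : l.length ≤ (l.flatMap tribMap).length := by
  induction l with
  | nil => simp
  | cons h t ih =>
    rw [List.flatMap_cons, List.length_append]
    have := tribMap_len_pos h
    simp only [List.length_cons]
    omega

lemma tribIter_head : ∀ k, ∃ t, tribIter k = 0 :: t := by
  intro k
  induction k with
  | zero => exact ⟨[], rfl⟩
  | succ k ih =>
    obtain ⟨t, ht⟩ := ih
    refine ⟨1 :: t.flatMap tribMap, ?_⟩
    show (tribIter k).flatMap tribMap = _
    rw [ht, List.flatMap_cons]
    rfl

lemma tribIter_len : ∀ k, k + 1 ≤ (tribIter k).length := by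
  intro k
  induction k with
  | zero => simp [tribIter]
  | succ k ih =>
    obtain ⟨t, ht⟩ := tribIter_head k
    show k + 2 ≤ ((tribIter k).flatMap tribMap).length
    rw [ht, List.flatMap_cons, List.length_append]
    have h1 := flatMap_len_ge t
    have h2 : t.length + 1 = (tribIter k).length := by rw [ht]; simp
    have : (tribMap 0).length = 2 := rfl
    omega

lemma tribIter_prefix (k : ℕ) : tribIter k <+: tribIter (k+1) := by
  induction k with
  | zero => exact ⟨[1], rfl⟩
  | succ k ih =>
    obtain ⟨t, ht⟩ := ih
    show (tribIter k).flatMap tribMap <+: (tribIter (k+1)).flatMap tribMap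
    rw [← ht, List.flatMap_append]
    exact ⟨t.flatMap tribMap, rfl⟩

lemma tribIter_prefix_le {j k : ℕ} (h : j ≤ k) : tribIter j <+: tribIter k := by
  induction k with
  | zero => rw [Nat.le_zero.mp h]
  | succ k ih =>
    rcases Nat.lt_or_ge j (k+1) with h' | h'
    · exact (ih (by omega)).trans (tribIter_prefix k)
    · have : j = k + 1 := by omega
      rw [this]

lemma getD_of_prefix {l₁ l₂ : List ℕ} (h : l₁ <+: l₂) {n : ℕ} (hn : n < l₁.length) :
    l₂.getD n 0 = l₁.getD n 0 := by
  obtain ⟨t, rfl⟩ := h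
  exact List.getD_append _ _ _ _ hn

lemma tribWord_eq_getD {n m : ℕ} (hn : n < (tribIter m).length) :
    tribWord n = (tribIter m).getD n 0 := by
  show (tribIter (n+1)).getD n 0 = _
  rcases le_or_gt m (n+1) with h | h
  · exact getD_of_prefix (tribIter_prefix_le h) hn
  · have hn' : n < (tribIter (n+1)).length := by have := tribIter_len (n+1); omega
    exact (getD_of_prefix (tribIter_prefix_le (by omega : n + 1 ≤ m)) hn').symm

lemma tribIter_mem_le {k x : ℕ} (h : x ∈ tribIter k) : x ≤ 2 := by
  induction k with
  | zero => simp only [tribIter, List.mem_singleton] at h; omega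
  | succ k ih =>
    obtain ⟨c, hc, hx⟩ := List.mem_flatMap.mp h
    clear h
    unfold tribMap at hx
    split at hx <;> [skip; split at hx] <;> simp_all <;> omega

lemma tribWord_le2 (n : ℕ) : tribWord n ≤ 2 := by
  have hn : n < (tribIter (n+1)).length := by have := tribIter_len (n+1); omega
  have : tribWord n ∈ tribIter (n+1) := by
    rw [tribWord, List.getD_eq_getElem _ _ hn]
    exact List.getElem_mem _
  exact tribIter_mem_le this


/-- Block boundaries: `tb k` is the start position of the image of letter `k`. -/
def tb : ℕ → ℕ
  | 0 => 0
  | k+1 => tb k + (tribMap (tribWord k)).length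

/-- partial sums of block lengths over a list -/
def S (l : List ℕ) (k : ℕ) : ℕ := ((l.take k).map (fun c => (tribMap c).length)).sum

lemma S_zero (l : List ℕ) : S l 0 = 0 := rfl

lemma S_succ (l : List ℕ) {k : ℕ} (hk : k < l.length) :
    S l (k+1) = S l k + (tribMap (l.getD k 0)).length := by
  unfold S
  rw [List.take_succ, List.getElem?_eq_getElem hk, List.map_append, List.sum_append,
      List.getD_eq_getElem _ _ hk]
  simp

lemma getD_flatMap : ∀ (l : List ℕ) (k : ℕ), k < l.length →
    ∀ r, r < (tribMap (l.getD k 0)).length →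
    (l.flatMap tribMap).getD (S l k + r) 0 = (tribMap (l.getD k 0)).getD r 0 := by
  intro l
  induction l with
  | nil => intro k hk; simp at hk
  | cons h t ih =>
    intro k hk r hr
    cases k with
    | zero =>
      rw [List.flatMap_cons]
      rw [S_zero, Nat.zero_add]
      exact List.getD_append _ _ _ _ (by simpa using hr)
    | succ k =>
      have hk' : k < t.length := by simpa using hk
      have hS : S (h :: t) (k+1) = (tribMap h).length + S t k := by
        simp [S, List.take_succ_cons, List.sum_cons]
      rw [List.flatMap_cons, hS]
      have : (tribMap h).length + S t k + r = (tribMap h).length + (S t k + r) := by omega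
      rw [this, List.getD_append_right _ _ _ _ (by omega)]
      have : (tribMap h).length + (S t k + r) - (tribMap h).length = S t k + r := by omega
      rw [this]
      simp only [List.getD_cons_succ] at hr ⊢
      exact ih k hk' r hr

lemma S_eq_tb {m : ℕ} : ∀ {k : ℕ}, k ≤ (tribIter m).length → S (tribIter m) k = tb k := by
  intro k
  induction k with
  | zero => intro _; rfl
  | succ k ih =>
    intro hk
    have hk' : k < (tribIter m).length := by omega
    rw [S_succ _ hk', ih (by omega), ← tribWord_eq_getD hk']
    rfl

/-- The key structure lemma: the word is a fixed point of the morphism. -/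
lemma key (k r : ℕ) (hr : r < (tribMap (tribWord k)).length) :
    tribWord (tb k + r) = (tribMap (tribWord k)).getD r 0 := by
  set m := tb k + r + k + 1 with hm
  have hkm : k < (tribIter m).length := by
    have := tribIter_len m; omega
  have e1 : (tribIter m).getD k 0 = tribWord k := (tribWord_eq_getD hkm).symm
  have hlen : tb k + r < (tribIter (m+1)).length := by
    have := tribIter_len (m+1); omega
  have e2 : tribWord (tb k + r) = (tribIter (m+1)).getD (tb k + r) 0 := tribWord_eq_getD hlen
  have e3 : tribIter (m+1) = (tribIter m).flatMap tribMap := rfl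
  rw [e2, e3, ← S_eq_tb (le_of_lt hkm)]
  rw [getD_flatMap (tribIter m) k hkm r (by rwa [e1])]
  rw [e1]


local notation "T" => tribWord

lemma len_eq_one {k : ℕ} (h : T k = 2) : (tribMap (T k)).length = 1 := by
  rw [h]; rfl

lemma len_eq_two {k : ℕ} (h : T k ≠ 2) : (tribMap (T k)).length = 2 := by
  have h2 := tribWord_le2 k
  interval_cases hh : (T k) <;> simp_all [tribMap]

lemma tb_succ_one {k : ℕ} (h : T k = 2) : tb (k+1) = tb k + 1 := by
  show tb k + _ = _
  rw [len_eq_one h]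

lemma tb_succ_two {k : ℕ} (h : T k ≠ 2) : tb (k+1) = tb k + 2 := by
  show tb k + _ = _
  rw [len_eq_two h]

lemma tb_succ_le (k : ℕ) : tb (k+1) ≤ tb k + 2 := by
  by_cases h : T k = 2
  · rw [tb_succ_one h]; omega
  · rw [tb_succ_two h]

lemma tb_succ_gt (k : ℕ) : tb k < tb (k+1) := by
  by_cases h : T k = 2
  · rw [tb_succ_one h]; omega
  · rw [tb_succ_two h]; omega

lemma tb_add_ge (a e : ℕ) : tb a + e ≤ tb (a + e) := by
  induction e with
  | zero => simp
  | succ e ih =>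
    have h := tb_succ_gt (a + e)
    have e1 : a + (e + 1) = (a + e) + 1 := by omega
    rw [e1]
    omega

lemma tb_mono {a b : ℕ} (h : a ≤ b) : tb a ≤ tb b := by
  have h3 := tb_add_ge a (b - a)
  rw [show a + (b - a) = b by omega] at h3
  omega

lemma tb_strict {a b : ℕ} (h : a < b) : tb a < tb b := by
  have h3 := tb_add_ge a (b - a)
  rw [show a + (b - a) = b by omega] at h3
  omega

lemma tb_inj {a b : ℕ} (h : tb a = tb b) : a = b := by
  rcases Nat.lt_trichotomy a b with h' | h' | h'
  · have := tb_strict h'; omega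
  · exact h'
  · have := tb_strict h'; omega

/-- every block starts with letter 0 -/
lemma T_tb (k : ℕ) : T (tb k) = 0 := by
  have h := key k 0 (tribMap_len_pos (T k))
  rw [Nat.add_zero] at h
  rw [h, tribMap_getD_zero]

/-- second letter of a long block -/
lemma T_tb1 {k : ℕ} (h : T k ≠ 2) : T (tb k + 1) = T k + 1 := by
  have hlen : (1 : ℕ) < (tribMap (T k)).length := by rw [len_eq_two h]; omega
  have hk := key k 1 hlen
  have h2 := tribWord_le2 k
  interval_cases hh : (T k) <;> simp_all [tribMap]

lemma letter2_iff {k : ℕ} : T k = 2 ↔ T (tb k + 1) = 0 := by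
  constructor
  · intro h
    have : tb (k+1) = tb k + 1 := tb_succ_one h
    rw [← this]; exact T_tb (k+1)
  · intro h
    by_contra hne
    have := T_tb1 hne
    omega

lemma cover (x : ℕ) : ∃ k, tb k ≤ x ∧ x < tb (k+1) := by
  induction x with
  | zero =>
    refine ⟨0, le_of_eq rfl, ?_⟩
    have h := tb_succ_gt 0
    have h0 : tb 0 = 0 := rfl
    omega
  | succ x ih =>
    obtain ⟨k, h1, h2⟩ := ih
    by_cases h : x + 1 < tb (k+1)
    · exact ⟨k, by omega, h⟩
    · have hx : tb (k+1) = x + 1 := by omega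
      exact ⟨k+1, by omega, by have := tb_succ_gt (k+1); omega⟩

lemma zero_is_boundary {x : ℕ} (h : T x = 0) : ∃ k, tb k = x := by
  obtain ⟨k, h1, h2⟩ := cover x
  by_cases hx : x = tb k
  · exact ⟨k, hx.symm⟩
  · exfalso
    have hle := tb_succ_le k
    have hx1 : x = tb k + 1 := by omega
    have hne : T k ≠ 2 := by
      intro h2'
      have := tb_succ_one h2'
      omega
    have := T_tb1 hne
    rw [← hx1] at this
    omega

lemma nonzero_struct {x : ℕ} (h : T x ≠ 0) : ∃ k, tb k + 1 = x ∧ tb (k+1) = x + 1 ∧ T k ≠ 2 := by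
  obtain ⟨k, h1, h2⟩ := cover x
  have hx : x ≠ tb k := by intro hh; rw [hh] at h; exact h (T_tb k)
  have hle := tb_succ_le k
  have hx1 : x = tb k + 1 := by omega
  have hne : T k ≠ 2 := by
    intro h2'
    have := tb_succ_one h2'
    omega
  exact ⟨k, by omega, by have := tb_succ_two hne; omega, hne⟩

lemma next_zero {x : ℕ} (h : T x ≠ 0) : T (x+1) = 0 := by
  obtain ⟨k, h1, h2, _⟩ := nonzero_struct h
  rw [← h2]; exact T_tb (k+1)

lemma adj {j g x : ℕ} (h1 : tb j = x) (h2 : tb g = x + 1) : g = j + 1 := by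
  have hlt : j < g := by
    by_contra hh
    have := tb_mono (by omega : g ≤ j)
    omega
  have h3 : tb j + 1 ≤ tb (j+1) := tb_succ_gt j
  have h4 : tb (j+1) ≤ tb g := tb_mono (by omega : j + 1 ≤ g)
  have : tb (j+1) = tb g := by omega
  have := tb_inj this
  omega

/-- no three consecutive zeros -/
lemma no000 {x : ℕ} (h0 : T x = 0) (h1 : T (x+1) = 0) (h2 : T (x+2) = 0) : False := by
  obtain ⟨k1, hk1⟩ := zero_is_boundary h0
  obtain ⟨k2, hk2⟩ := zero_is_boundary h1
  obtain ⟨k3, hk3⟩ := zero_is_boundary h2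
  have e2 : k2 = k1 + 1 := adj hk1 hk2
  subst e2
  have e3 : k3 = k1 + 1 + 1 := adj hk2 (show tb k3 = x + 1 + 1 by rw [hk3])
  subst e3
  have t1 : T k1 = 2 := by
    by_contra hne
    have := tb_succ_two hne
    omega
  have t2 : T (k1 + 1) = 2 := by
    by_contra hne
    have := tb_succ_two hne
    omega
  have : T (k1 + 1) = 0 := next_zero (show T k1 ≠ 0 by omega)
  omega

/-- letter transfer: if block starts shift by ρ and second positions agree, letters agree -/
lemma letterEq {k μ ρ : ℕ} (hb : tb (k+μ) = tb k + ρ)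
    (heq : T (tb k + 1) = T (tb k + 1 + ρ)) : T k = T (k + μ) := by
  have hsh : tb (k+μ) + 1 = tb k + 1 + ρ := by omega
  by_cases h : T k = 2
  · have h0 : T (tb k + 1) = 0 := letter2_iff.mp h
    have : T (tb (k+μ) + 1) = 0 := by rw [hsh, ← heq]; exact h0
    have := letter2_iff.mpr this
    omega
  · have h1 : T (tb k + 1) = T k + 1 := T_tb1 h
    have h2 : T (tb (k+μ) + 1) = T k + 1 := by rw [hsh, ← heq]; exact h1
    have hne : T (k+μ) ≠ 2 := by
      intro hh
      have := letter2_iff.mp hh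
      omega
    have := T_tb1 hne
    omega

/-- boundary-shift transfer step -/
lemma step {k μ ρ : ℕ} (hb : tb (k+μ) = tb k + ρ)
    (heq : T (tb k + 1) = T (tb k + 1 + ρ)) : tb (k+1+μ) = tb (k+1) + ρ := by
  have hsh : tb (k+μ) + 1 = tb k + 1 + ρ := by omega
  have hL := letterEq hb heq
  by_cases h : T k = 2
  · have h2 : T (k+μ) = 2 := by omega
    have e1 : tb (k+1) = tb k + 1 := tb_succ_one h
    have e2 : tb (k+μ+1) = tb (k+μ) + 1 := tb_succ_one h2
    have : k + 1 + μ = k + μ + 1 := by omega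
    rw [this, e2, e1, hb]
    omega
  · have h2 : T (k+μ) ≠ 2 := by omega
    have e1 : tb (k+1) = tb k + 2 := tb_succ_two h
    have e2 : tb (k+μ+1) = tb (k+μ) + 2 := tb_succ_two h2
    have : k + 1 + μ = k + μ + 1 := by omega
    rw [this, e2, e1, hb]
    omega

section Chain

variable {i hi ρ k₀ μ : ℕ}
variable (EqH : ∀ j, i ≤ j → j ≤ hi → T j = T (j + ρ))
variable (base : tb (k₀ + μ) = tb k₀ + ρ)
variable (hlo : i ≤ tb k₀ + 1)

include EqH base hlo

lemma chain : ∀ d, tb (k₀ + d) ≤ hi → tb (k₀ + d + μ) = tb (k₀ + d) + ρ := by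
  intro d
  induction d with
  | zero => intro _; simpa using base
  | succ d ih =>
    intro hd
    rw [show k₀ + (d + 1) = k₀ + d + 1 from rfl] at hd ⊢
    have hlt : tb (k₀ + d) < tb (k₀ + d + 1) := tb_succ_gt _
    have hd' : tb (k₀ + d) ≤ hi := by omega
    have ihd := ih hd'
    have hj1 : i ≤ tb (k₀ + d) + 1 := by
      have := tb_mono (Nat.le_add_right k₀ d); omega
    have hj2 : tb (k₀ + d) + 1 ≤ hi := by omega
    have heq := EqH (tb (k₀ + d) + 1) hj1 hj2
    exact step ihd heq

lemma letters : ∀ t, tb (k₀ + t) + 1 ≤ hi → T (k₀ + t) = T (k₀ + t + μ) := by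
  intro t ht
  have hc := chain EqH base hlo t (by omega)
  have hj1 : i ≤ tb (k₀ + t) + 1 := by
    have := tb_mono (Nat.le_add_right k₀ t); omega
  exact letterEq hc (EqH (tb (k₀ + t) + 1) hj1 ht)

end Chain


/-- Existence of a `(4 - 1/n)`-power: a factor of length `4n-1` with period `n`. -/
def Weak (n : ℕ) : Prop := ∃ i, ∀ t, t < 3 * n - 1 → T (i + t) = T (i + n + t)

lemma weak_one_false : ¬ Weak 1 := by
  rintro ⟨i, H⟩
  have h0 : T i = T (i + 1) := by
    have := H 0 (by norm_num)
    simpa using this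
  have h1 : T (i + 1) = T (i + 2) := by
    have := H 1 (by norm_num)
    rwa [show i + 1 + 1 = i + 2 by omega] at this
  by_cases h : T i = 0
  · exact no000 h (by omega) (by omega)
  · have := next_zero h
    omega

lemma reduce {n : ℕ} (hn : 2 ≤ n) (hw : Weak n) : ∃ m, 1 ≤ m ∧ m < n ∧ Weak m := by
  obtain ⟨i, H⟩ := hw
  have EqH : ∀ j, i ≤ j → j ≤ i + (3*n - 2) → T j = T (j + n) := by
    intro j h1 h2
    have ht := H (j - i) (by omega)
    rw [show i + (j - i) = j by omega, show i + n + (j - i) = j + n by omega] at ht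
    exact ht
  by_cases hTi : T i = 0
  · -- T i = 0 : anchor at the boundary tb k₀ = i
    obtain ⟨k₀, hk₀⟩ := zero_is_boundary hTi
    have hTn : T (i + n) = 0 := by
      have := EqH i (le_refl i) (by omega); omega
    obtain ⟨g, hg⟩ := zero_is_boundary hTn
    have hgk : k₀ < g := by
      by_contra hcon
      have := tb_mono (by omega : g ≤ k₀)
      omega
    have hg' : g = k₀ + (g - k₀) := by omega
    set μ := g - k₀ with hμdef
    have hμ1 : 1 ≤ μ := by omega
    have base : tb (k₀ + μ) = tb k₀ + n := by rw [← hg']; omega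
    have hμlen : μ ≤ n := by
      have := tb_add_ge k₀ μ
      omega
    have hμn : μ < n := by
      rcases Nat.lt_or_ge μ n with h' | h'
      · exact h'
      · exfalso
        have hμn' : μ = n := by omega
        have q1 : tb (k₀ + 1) = i + 1 := by
          have a1 := tb_add_ge (k₀ + 1) (μ - 1)
          rw [show k₀ + 1 + (μ - 1) = k₀ + μ by omega] at a1
          have a2 := tb_succ_gt k₀
          omega
        have q2 : tb (k₀ + 2) = i + 2 := by
          have a1 := tb_add_ge (k₀ + 2) (μ - 2)
          rw [show k₀ + 2 + (μ - 2) = k₀ + μ by omega] at a1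
          have a2 := tb_succ_gt (k₀ + 1)
          rw [show k₀ + 1 + 1 = k₀ + 2 from rfl] at a2
          omega
        have z1 : T (i + 1) = 0 := by rw [← q1]; exact T_tb (k₀ + 1)
        have z2 : T (i + 2) = 0 := by rw [← q2]; exact T_tb (k₀ + 2)
        exact no000 hTi z1 z2
    have hlo : i ≤ tb k₀ + 1 := by omega
    refine ⟨μ, hμ1, hμn, k₀, ?_⟩
    -- two subcases on the letter at i + n - 1
    by_cases hc : T (i + n - 1) = 0
    · -- zero: i+n-1 is a boundary adjacent to g
      obtain ⟨j₁, hj₁⟩ := zero_is_boundary hc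
      have hgj : g = j₁ + 1 := adj hj₁ (show tb g = (i + n - 1) + 1 by omega)
      have vj : tb (k₀ + (μ - 1)) = i + n - 1 := by
        rw [show k₀ + (μ - 1) = j₁ by omega]; exact hj₁
      have v2 : tb (k₀ + (2*μ - 1)) = i + 2*n - 1 := by
        have := chain EqH base hlo (μ - 1) (by omega)
        rw [show k₀ + (μ - 1) + μ = k₀ + (2*μ - 1) by omega] at this
        omega
      have v3 : tb (k₀ + (3*μ - 1)) = i + 3*n - 1 := by
        have := chain EqH base hlo (2*μ - 1) (by omega)
        rw [show k₀ + (2*μ - 1) + μ = k₀ + (3*μ - 1) by omega] at this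
        omega
      have hup : tb (k₀ + (3*μ - 2)) + 1 < tb (k₀ + (3*μ - 1)) := by
        have hlt : tb (k₀ + (3*μ - 2)) < tb (k₀ + (3*μ - 1)) := tb_strict (by omega)
        rcases Nat.lt_or_ge (tb (k₀ + (3*μ - 2)) + 1) (tb (k₀ + (3*μ - 1))) with h' | h'
        · exact h'
        · exfalso
          have heq38 : tb (k₀ + (3*μ - 2)) = i + 3*n - 2 := by omega
          have z0 : T (i + 3*n - 2) = 0 := by rw [← heq38]; exact T_tb _
          have z1 : T (i + 2*n - 2) = 0 := by
            have := EqH (i + 2*n - 2) (by omega) (by omega)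
            rw [show i + 2*n - 2 + n = i + 3*n - 2 by omega] at this
            omega
          have z2 : T (i + 2*n - 1) = 0 := by
            have := EqH (i + n - 1) (by omega) (by omega)
            rw [show i + n - 1 + n = i + 2*n - 1 by omega] at this
            omega
          have z3 : T (i + 2*n) = 0 := by
            have := EqH (i + n) (by omega) (by omega)
            rw [show i + n + n = i + 2*n by omega] at this
            omega
          refine no000 (x := i + 2*n - 2) z1 ?_ ?_
          · rw [show i + 2*n - 2 + 1 = i + 2*n - 1 by omega]; exact z2
          · rw [show i + 2*n - 2 + 2 = i + 2*n by omega]; exact z3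
      intro t ht
      have hbd : tb (k₀ + t) + 1 ≤ i + (3*n - 2) := by
        have := tb_mono (by omega : k₀ + t ≤ k₀ + (3*μ - 2))
        omega
      have := letters EqH base hlo t hbd
      rw [show k₀ + μ + t = k₀ + t + μ by omega]
      exact this
    · -- nonzero letter at i+n-1
      obtain ⟨j₁, hj₁, hj₁', _⟩ := nonzero_struct hc
      have hgj : g = j₁ + 1 := tb_inj (by omega)
      have vj : tb (k₀ + (μ - 1)) = i + n - 2 := by
        rw [show k₀ + (μ - 1) = j₁ by omega]
        have hn1 : 1 ≤ i + n - 1 := by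
          rcases Nat.eq_zero_or_pos (i + n - 1) with h' | h'
          · exfalso; rw [h'] at hc; exact hc (show T 0 = 0 from rfl)
          · omega
        omega
      have v2 : tb (k₀ + (2*μ - 1)) = i + 2*n - 2 := by
        have := chain EqH base hlo (μ - 1) (by omega)
        rw [show k₀ + (μ - 1) + μ = k₀ + (2*μ - 1) by omega] at this
        omega
      have v3 : tb (k₀ + (3*μ - 1)) = i + 3*n - 2 := by
        have := chain EqH base hlo (2*μ - 1) (by omega)
        rw [show k₀ + (2*μ - 1) + μ = k₀ + (3*μ - 1) by omega] at this
        omega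
      intro t ht
      have hbd : tb (k₀ + t) + 1 ≤ i + (3*n - 2) := by
        have h1 := tb_mono (by omega : k₀ + t ≤ k₀ + (3*μ - 2))
        have h2 : tb (k₀ + (3*μ - 2)) < tb (k₀ + (3*μ - 1)) := tb_strict (by omega)
        omega
      have := letters EqH base hlo t hbd
      rw [show k₀ + μ + t = k₀ + t + μ by omega]
      exact this
  · -- T i ≠ 0 : anchor one position to the left
    obtain ⟨h, hh1, hh2, _⟩ := nonzero_struct hTi
    have hTin : T (i + n) ≠ 0 := by
      have := EqH i (le_refl i) (by omega); omega
    obtain ⟨g, hg1, hg2, _⟩ := nonzero_struct hTin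
    have hgh : h < g := by
      by_contra hcon
      have := tb_mono (by omega : g ≤ h)
      omega
    have hg' : g = h + (g - h) := by omega
    set μ := g - h with hμdef
    have hμ1 : 1 ≤ μ := by omega
    have base : tb (h + μ) = tb h + n := by rw [← hg']; omega
    have hμn : μ < n := by
      have h3 := tb_add_ge (h + 1) (μ - 1)
      rw [show h + 1 + (μ - 1) = h + μ by omega] at h3
      omega
    have hlo : i ≤ tb h + 1 := by omega
    refine ⟨μ, hμ1, hμn, h, ?_⟩
    have v2 : tb (h + 2*μ) = i + 2*n - 1 := by
      have := chain EqH base hlo μ (by omega)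
      rw [show h + μ + μ = h + 2*μ by omega] at this
      omega
    have v3 : tb (h + 3*μ) = i + 3*n - 1 := by
      have := chain EqH base hlo (2*μ) (by rw [show h + 2*μ = h + 2*μ from rfl]; omega)
      rw [show h + 2*μ + μ = h + 3*μ by omega] at this
      omega
    intro t ht
    have hbd : tb (h + t) + 1 ≤ i + (3*n - 2) := by
      have h1 := tb_mono (by omega : h + t ≤ h + (3*μ - 2))
      have h2 := tb_add_ge (h + (3*μ - 2)) 2
      rw [show h + (3*μ - 2) + 2 = h + 3*μ by omega] at h2
      omega
    have := letters EqH base hlo t hbd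
    rw [show h + μ + t = h + t + μ by omega]
    exact this

lemma no_weak : ∀ n, 1 ≤ n → ¬ Weak n := by
  intro n
  induction n using Nat.strong_induction_on with
  | _ n ih =>
    intro hn hw
    rcases Nat.lt_or_ge n 2 with h2 | h2
    · have : n = 1 := by omega
      subst this
      exact weak_one_false hw
    · obtain ⟨m, hm1, hmn, hwm⟩ := reduce h2 hw
      exact ih m hmn hm1 hwm

end TribAux


/-- The Tribonacci word contains no fourth powers. -/
theorem tribWord_no_fourth_powers :
    ¬ ∃ (i n : ℕ), 0 < n ∧ ∀ t < 3 * n, tribWord (i + t) = tribWord (i + n + t) := by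
  rintro ⟨i, n, hn, H⟩
  exact TribAux.no_weak n hn ⟨i, fun t ht => H t (by omega)⟩
end

section
/- Every square in the infinite Tribonacci word T has order T_n or T_n + T_{n-1} for some n ≥ 2; that is, if there exist i and m > 0 with T[i+t] = T[i+m+t] for all 0 ≤ t < m, then m = T_n or m = T_n + T_{n-1} for some n ≥ 2. -/
/-!
On Parikh vectors (numbers of `0`s, `1`s, `2`s), `tribMap` acts by
`(a, b, c) ↦ (a + b + c, a, b)`, which maps `v n = (T (n+1), T n, T (n-1))` to `v (n+1)`.
By strong induction on `m`, the Parikh vector of the first half of a square of order `m` is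
`v n` or `v (n+1) + v n`, whose entries add up to `T (n+2)` or `T (n+3) + T (n+2)`.

Since `W = tribMap (W 0) tribMap (W 1) ⋯` and the `0`s of `W` are exactly the block starts, a
square moved to start with a `0` consists of whole blocks, and the letter `W k` can be read off
from the letter following its block start. Desubstituting yields a factor of smaller order with
Parikh vector `p` such that the original one is the image of `p`. When the first half ends with a
one-letter block `0`, only a near-square (halves agreeing except possibly in the last letter)
comes back, so the induction carries near-squares along as well.
-/

namespace Tribonacci

local notation "W" => tribWord

lemma getD_flatMap_length_take_add {α β : Type*} (l : List α) (f : α → List β) {k j : ℕ}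
    (hk : k < l.length) (hj : j < (f l[k]).length) (d : β) :
    (l.flatMap f).getD (((l.take k).flatMap f).length + j) d = (f l[k]).getD j d :=
  calc (l.flatMap f).getD (((l.take k).flatMap f).length + j) d
      = ((l.take k ++ l[k] :: l.drop (k + 1)).flatMap f).getD
          (((l.take k).flatMap f).length + j) d := by
        rw [← List.drop_eq_getElem_cons hk, List.take_append_drop]
    _ = (f l[k]).getD j d := by
        rw [List.flatMap_append, List.flatMap_cons, List.getD_append_right _ _ _ _ (by omega),
          Nat.add_sub_cancel_left, List.getD_append _ _ _ _ hj]

lemma tribIter_succ (k : ℕ) : tribIter (k + 1) = (tribIter k).flatMap tribMap := rfl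

lemma tribIter_prefix_succ (k : ℕ) : tribIter k <+: tribIter (k + 1) := by
  induction k with
  | zero => exact ⟨[1], rfl⟩
  | succ k ih => exact ih.flatMap tribMap

lemma tribIter_prefix {k k' : ℕ} (h : k ≤ k') : tribIter k <+: tribIter k' := by
  induction h with
  | refl => exact List.prefix_refl _
  | step _ ih => exact ih.trans (tribIter_prefix_succ _)

lemma tribMap_ne_nil (a : ℕ) : tribMap a ≠ [] := by
  unfold tribMap; split_ifs <;> simp

lemma length_le_length_flatMap_tribMap (l : List ℕ) :
    l.length ≤ (l.flatMap tribMap).length := by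
  induction l with
  | nil => simp
  | cons a l ih =>
    have := List.length_pos_iff.mpr (tribMap_ne_nil a)
    simp only [List.flatMap_cons, List.length_append, List.length_cons]
    omega

lemma exists_tribIter_eq_cons (k : ℕ) : ∃ t, tribIter k = 0 :: t := by
  induction k with
  | zero => exact ⟨[], rfl⟩
  | succ k ih =>
    obtain ⟨t, ht⟩ := ih
    exact ⟨1 :: t.flatMap tribMap, by rw [tribIter_succ, ht]; rfl⟩

lemma lt_length_tribIter (k : ℕ) : k < (tribIter k).length := by
  induction k with
  | zero => simp [tribIter]
  | succ k ih =>
    obtain ⟨t, ht⟩ := exists_tribIter_eq_cons k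
    have := length_le_length_flatMap_tribMap t
    rw [ht] at ih
    rw [tribIter_succ, ht, List.flatMap_cons, show tribMap 0 = [0, 1] from rfl]
    simp only [List.length_append, List.length_cons] at ih ⊢
    omega

lemma getElem_tribIter {k n : ℕ} (hn : n < (tribIter k).length) : (tribIter k)[n] = W n := by
  have hn' : n < (tribIter (n + 1)).length := (lt_length_tribIter (n + 1)).trans' (by omega)
  rw [tribWord, List.getD_eq_getElem _ _ hn', (tribIter_prefix (le_max_left k (n + 1))).getElem hn,
    (tribIter_prefix (le_max_right k (n + 1))).getElem hn']

lemma tribWord_lt_three (n : ℕ) : W n < 3 := by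
  have hmem : ∀ k, ∀ a ∈ tribIter k, a < 3 := by
    intro k
    induction k with
    | zero => simp [tribIter]
    | succ k _ =>
      simp only [tribIter_succ, List.mem_flatMap, tribMap]
      rintro a ⟨b, -, hb⟩
      split_ifs at hb <;> simp at hb <;> omega
  have hn := lt_length_tribIter (n + 1)
  rw [← getElem_tribIter (hn.trans' (by omega))]
  exact hmem _ _ (List.getElem_mem _)

lemma tribWord_cases (n : ℕ) : W n = 0 ∨ W n = 1 ∨ W n = 2 := by
  have := tribWord_lt_three n; omega

/-- `blockStart k` is the position of `tribMap (W k)` in `W = tribMap (W 0) tribMap (W 1) ⋯`. -/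
def blockStart : ℕ → ℕ
  | 0 => 0
  | k + 1 => blockStart k + (tribMap (W k)).length

local notation "bs" => blockStart

lemma length_flatMap_take_tribIter {K k : ℕ} (hk : k ≤ (tribIter K).length) :
    (((tribIter K).take k).flatMap tribMap).length = bs k := by
  induction k with
  | zero => simp [blockStart]
  | succ k ih =>
    rw [List.take_add_one, List.getElem?_eq_getElem hk, List.flatMap_append, List.length_append,
      ih (by omega), getElem_tribIter hk]
    simp [blockStart]

lemma tribWord_blockStart_add (k : ℕ) {j : ℕ} (hj : j < (tribMap (W k)).length) :
    W (bs k + j) = (tribMap (W k)).getD j 0 := by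
  have hk : k + 1 < (tribIter (k + 1)).length := lt_length_tribIter (k + 1)
  have hlt : bs k + j < ((tribIter (k + 1)).flatMap tribMap).length := by
    have := (((tribIter (k + 1)).take_prefix (k + 1)).flatMap tribMap).length_le
    rw [length_flatMap_take_tribIter hk.le] at this
    simp only [blockStart] at this
    omega
  have hWk : (tribIter (k + 1))[k] = W k := getElem_tribIter (by omega)
  rw [← tribIter_succ] at hlt
  rw [← getElem_tribIter hlt, ← List.getD_eq_getElem _ 0 hlt, tribIter_succ,
    ← length_flatMap_take_tribIter (K := k + 1) (by omega),
    getD_flatMap_length_take_add _ _ (by omega) (by rwa [hWk]), hWk]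

lemma blockStart_succ (k : ℕ) : bs (k + 1) = bs k + if W k = 2 then 1 else 2 := by
  rw [blockStart]; rcases tribWord_cases k with h | h | h <;> simp [h, tribMap]

lemma tribWord_blockStart (k : ℕ) : W (bs k) = 0 := by
  have h := tribWord_blockStart_add k (j := 0) (List.length_pos_iff.mpr (tribMap_ne_nil _))
  rcases tribWord_cases k with hk | hk | hk <;> simpa [hk, tribMap] using h

lemma tribWord_blockStart_add_one (k : ℕ) : W (bs k + 1) = (W k + 1) % 3 := by
  by_cases h2 : W k = 2
  · have := tribWord_blockStart (k + 1)
    rw [blockStart_succ, if_pos h2] at this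
    rw [this, h2]
  obtain hk | hk : W k = 0 ∨ W k = 1 := by have := tribWord_lt_three k; omega
  all_goals simpa [hk, tribMap] using tribWord_blockStart_add k (j := 1) (by simp [hk, tribMap])

lemma tribWord_eq_of_blockStart_add_one {k l : ℕ} (h : W (bs k + 1) = W (bs l + 1)) :
    W k = W l := by
  rw [tribWord_blockStart_add_one, tribWord_blockStart_add_one] at h
  have := tribWord_lt_three k
  have := tribWord_lt_three l
  omega

lemma blockStart_succ_eq_ite (k : ℕ) :
    bs (k + 1) = bs k + if W (bs k + 1) = 0 then 1 else 2 := by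
  have := tribWord_lt_three k
  rw [blockStart_succ, tribWord_blockStart_add_one]
  congr 2
  apply propext
  omega

lemma blockStart_strictMono : StrictMono bs :=
  strictMono_nat_of_lt_succ fun k => by rw [blockStart_succ]; split_ifs <;> omega

lemma exists_blockStart (p : ℕ) : ∃ k, bs k = p ∨ (bs k + 1 = p ∧ bs (k + 1) = p + 1) := by
  induction p with
  | zero => exact ⟨0, Or.inl rfl⟩
  | succ p ih =>
    obtain ⟨k, rfl | ⟨rfl, h⟩⟩ := ih
    · have h := blockStart_succ k
      split_ifs at h
      · exact ⟨k + 1, Or.inl h⟩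
      · exact ⟨k, Or.inr ⟨rfl, h⟩⟩
    · exact ⟨k + 1, Or.inl h⟩

lemma tribWord_eq_zero_iff {p : ℕ} : W p = 0 ↔ ∃ k, bs k = p := by
  refine ⟨fun hp => ?_, fun ⟨k, hk⟩ => hk ▸ tribWord_blockStart k⟩
  obtain ⟨k, hk | ⟨rfl, h⟩⟩ := exists_blockStart p
  · exact ⟨k, hk⟩
  · rw [blockStart_succ_eq_ite, if_pos hp] at h
    omega

lemma exists_blockStart_of_tribWord_ne_zero {p : ℕ} (hp : W p ≠ 0) :
    ∃ k, bs k + 1 = p ∧ bs (k + 1) = p + 1 := by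
  obtain ⟨k, rfl | h⟩ := exists_blockStart p
  · exact absurd (tribWord_blockStart k) hp
  · exact ⟨k, h⟩

lemma tribWord_succ_eq_zero {p : ℕ} (hp : W p ≠ 0) : W (p + 1) = 0 := by
  obtain ⟨k, -, h⟩ := exists_blockStart_of_tribWord_ne_zero hp
  rw [← h, tribWord_blockStart]

lemma tribWord_pred_eq_zero {p : ℕ} (hp : W p ≠ 0) : ∃ q, q + 1 = p ∧ W q = 0 := by
  obtain ⟨k, h, -⟩ := exists_blockStart_of_tribWord_ne_zero hp
  exact ⟨bs k, h, tribWord_blockStart k⟩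

lemma blockStart_add_two (k : ℕ) : bs k + 3 ≤ bs (k + 2) := by
  have h1 := blockStart_succ k
  have h2 : bs (k + 2) = _ := blockStart_succ (k + 1)
  split_ifs at h1 h2 with hk hk1 <;> try omega
  exact absurd (tribWord_succ_eq_zero (by omega : W k ≠ 0)) (by omega)

lemma not_three_zeros (p : ℕ) : ¬ (W p = 0 ∧ W (p + 1) = 0 ∧ W (p + 2) = 0) := by
  rintro ⟨h0, h1, h2⟩
  obtain ⟨k, rfl⟩ := tribWord_eq_zero_iff.mp h0
  have e1 := blockStart_succ_eq_ite k
  rw [if_pos h1] at e1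
  have e2 : bs (k + 2) = _ := blockStart_succ_eq_ite (k + 1)
  rw [e1, if_pos h2] at e2
  have := blockStart_add_two k
  omega

lemma lt_of_blockStart_add_eq {k n m : ℕ} (h : bs (k + n) = bs k + m) (hm : 2 ≤ m) : n < m := by
  match n with
  | 0 => omega
  | 1 => have := blockStart_succ k; split_ifs at this <;> omega
  | n + 2 =>
    have h2 := blockStart_add_two k
    have hn := blockStart_strictMono.add_le_nat n (k + 2)
    rw [show n + (k + 2) = k + (n + 2) by omega] at hn
    omega

lemma blockStart_eq_of_succ_of_eq_zero {k p : ℕ} (h : bs (k + 1) = p + 1) (hp : W p = 0) :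
    bs k = p := by
  obtain ⟨j, rfl⟩ := tribWord_eq_zero_iff.mp hp
  have := blockStart_strictMono.lt_iff_lt.mp (show bs j < bs (k + 1) by omega)
  have := blockStart_strictMono.monotone (show j ≤ k by omega)
  have := blockStart_strictMono (Nat.lt_add_one k)
  omega

lemma blockStart_eq_of_succ_of_ne_zero {k p : ℕ} (h : bs (k + 1) = p + 1) (hp : W p ≠ 0) :
    bs k + 1 = p := by
  have hk : bs k ≠ p := fun hk => hp (hk ▸ tribWord_blockStart k)
  have := blockStart_succ k
  split_ifs at this <;> omega

def letterVec : ℕ → ℕ × ℕ × ℕ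
  | 0 => (1, 0, 0)
  | 1 => (0, 1, 0)
  | _ => (0, 0, 1)

def parikh (i m : ℕ) : ℕ × ℕ × ℕ := ∑ t ∈ Finset.range m, letterVec (W (i + t))

lemma parikh_add (i m n : ℕ) : parikh i (m + n) = parikh i m + parikh (i + m) n := by
  simp only [parikh, Finset.sum_range_add, add_assoc]

lemma parikh_one (i : ℕ) : parikh i 1 = letterVec (W i) := by
  simp [parikh]

lemma parikh_succ_eq_of_tribWord_eq {i m : ℕ} (h : W i = W (i + m)) :
    parikh (i + 1) m = parikh i m := by
  have h1 := parikh_add i 1 m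
  rw [add_comm 1 m, parikh_add, parikh_one, parikh_one, h, add_comm] at h1
  exact (add_left_cancel h1).symm

lemma sum_parikh (i m : ℕ) : (parikh i m).1 + (parikh i m).2.1 + (parikh i m).2.2 = m := by
  induction m with
  | zero => simp [parikh]
  | succ m ih =>
    rw [parikh_add, parikh_one]
    rcases tribWord_cases (i + m) with h | h | h <;>
      simp only [h, letterVec, Prod.fst_add, Prod.snd_add] <;> omega

lemma parikh_snd_snd_pos {i m t : ℕ} (ht : t < m) (h : W (i + t) = 2) : 0 < (parikh i m).2.2 := by
  obtain ⟨s, rfl⟩ := Nat.exists_eq_add_of_lt ht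
  rw [show t + s + 1 = t + 1 + s by omega, parikh_add, parikh_add, parikh_one, h]
  simp [letterVec]

-- Each letter of `w` contributes one `0` to `tribMap w`, each `0` a `1` and each `1` a `2`.
def tribMapParikh : ℕ × ℕ × ℕ →+ ℕ × ℕ × ℕ where
  toFun p := (p.1 + p.2.1 + p.2.2, p.1, p.2.1)
  map_zero' := rfl
  map_add' p q := by
    ext <;> simp only [Prod.fst_add, Prod.snd_add]
    ring

lemma parikh_blockStart_succ (k : ℕ) :
    parikh (bs k) (bs (k + 1) - bs k) = tribMapParikh (letterVec (W k)) := by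
  rw [blockStart_succ, Nat.add_sub_cancel_left]
  split_ifs with h2
  · rw [parikh_one, tribWord_blockStart, h2]
    rfl
  · rw [show 2 = 1 + 1 from rfl, parikh_add, parikh_one, parikh_one, tribWord_blockStart,
      tribWord_blockStart_add_one]
    obtain h | h : W k = 0 ∨ W k = 1 := by have := tribWord_lt_three k; omega
    all_goals rw [h]; rfl

lemma parikh_blockStart (k n : ℕ) :
    parikh (bs k) (bs (k + n) - bs k) = tribMapParikh (parikh k n) := by
  induction n with
  | zero => simp [parikh]
  | succ n ih =>
    have h1 := blockStart_strictMono.monotone (show k ≤ k + n by omega)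
    have h2 := blockStart_strictMono (show k + n < k + n + 1 by omega)
    rw [← add_assoc,
      show bs (k + n + 1) - bs k = (bs (k + n) - bs k) + (bs (k + n + 1) - bs (k + n)) by omega,
      parikh_add, ih, show bs k + (bs (k + n) - bs k) = bs (k + n) by omega,
      parikh_blockStart_succ, parikh_add, parikh_one, map_add]

-- `trib (n - 1)` at `n = 0` is `trib 0 = 0`, the value `T_{-1}` that the recurrence dictates.
def tribVec (n : ℕ) : ℕ × ℕ × ℕ := (trib (n + 1), trib n, trib (n - 1))

lemma trib_add_two (n : ℕ) : trib (n + 2) = trib (n + 1) + trib n + trib (n - 1) := by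
  cases n with
  | zero => rfl
  | succ n => rw [trib]; rfl

lemma tribMapParikh_tribVec (n : ℕ) : tribMapParikh (tribVec n) = tribVec (n + 1) := by
  simp only [tribVec, Nat.add_sub_cancel]
  rw [trib_add_two]
  rfl

def IsSquareVec (p : ℕ × ℕ × ℕ) : Prop :=
  ∃ n, p = tribVec n ∨ p = tribVec (n + 1) + tribVec n

-- Besides the square vectors: those of the near-squares `10` and `20` of order one, and the
-- image `(1, 0, 1)` of `(0, 1, 0)` under `tribMapParikh`.
def IsNearSquareVec (p : ℕ × ℕ × ℕ) : Prop :=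
  IsSquareVec p ∨ p = (0, 1, 0) ∨ p = (0, 0, 1) ∨ p = (1, 0, 1)

lemma IsSquareVec.isNearSquareVec {p : ℕ × ℕ × ℕ} (h : IsSquareVec p) : IsNearSquareVec p :=
  Or.inl h

lemma IsSquareVec.tribMapParikh {p : ℕ × ℕ × ℕ} (h : IsSquareVec p) :
    IsSquareVec (tribMapParikh p) := by
  obtain ⟨n, rfl | rfl⟩ := h
  · exact ⟨n + 1, Or.inl (tribMapParikh_tribVec n)⟩
  · exact ⟨n + 1, Or.inr (by rw [map_add, tribMapParikh_tribVec, tribMapParikh_tribVec])⟩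

lemma isSquareVec_tribMapParikh_of_ne {p : ℕ × ℕ × ℕ} (h : IsNearSquareVec p)
    (hp : p ≠ (0, 1, 0)) : IsSquareVec (tribMapParikh p) := by
  obtain h | rfl | rfl | rfl := h
  · exact h.tribMapParikh
  · exact absurd rfl hp
  · exact ⟨0, Or.inl rfl⟩
  · exact ⟨0, Or.inr rfl⟩

lemma IsNearSquareVec.tribMapParikh {p : ℕ × ℕ × ℕ} (h : IsNearSquareVec p) :
    IsNearSquareVec (tribMapParikh p) := by
  by_cases hp : p = (0, 1, 0)
  · exact Or.inr (Or.inr (Or.inr (by rw [hp]; rfl)))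
  · exact (isSquareVec_tribMapParikh_of_ne h hp).isNearSquareVec

lemma IsSquareVec.exists_trib {p : ℕ × ℕ × ℕ} (h : IsSquareVec p) :
    ∃ n ≥ 2, p.1 + p.2.1 + p.2.2 = trib n ∨ p.1 + p.2.1 + p.2.2 = trib n + trib (n - 1) := by
  obtain ⟨n, rfl | rfl⟩ := h
  · exact ⟨n + 2, by omega, Or.inl (trib_add_two n).symm⟩
  · refine ⟨n + 3, by omega, Or.inr ?_⟩
    have h1 := trib_add_two n
    have h2 := trib_add_two (n + 1)
    simp only [tribVec, Prod.fst_add, Prod.snd_add, Nat.add_sub_cancel] at h2 ⊢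
    rw [show n + 3 - 1 = n + 2 by omega]
    ring_nf at h1 h2 ⊢
    omega

def Agree (i j r : ℕ) : Prop := ∀ t < r, W (i + t) = W (j + t)

lemma Agree.mono {i j r r' : ℕ} (h : Agree i j r) (hr : r' ≤ r) : Agree i j r' :=
  fun t ht => h t (by omega)

lemma Agree.tribWord_eq {i j r p q : ℕ} (h : Agree i j r) (hip : i ≤ p) (hp : p < i + r)
    (hq : p + j = q + i) : W p = W q := by
  have := h (p - i) (by omega)
  rwa [show i + (p - i) = p by omega, show j + (p - i) = q by omega] at this

section Desubstitution

variable {k l r : ℕ}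

-- The gap `bs (k + 1) - bs k` is read off the letter at `bs k + 1`, which the agreement transfers.
lemma Agree.blockStart_add (h : Agree (bs k) (bs l) r) :
    ∀ s, bs (k + s) < bs k + r → bs (k + s) + bs l = bs (l + s) + bs k := by
  intro s
  induction s with
  | zero => simp [add_comm]
  | succ s ih =>
    intro hs
    have hlt := blockStart_strictMono (show k + s < k + s + 1 by omega)
    have hmono := blockStart_strictMono.monotone (show k ≤ k + s by omega)
    rw [← add_assoc] at hs ⊢
    have hs' := ih (by omega)
    rw [← add_assoc, blockStart_succ_eq_ite, blockStart_succ_eq_ite,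
      h.tribWord_eq (q := bs (l + s) + 1) (by omega) (by omega) (by omega)]
    split_ifs <;> omega

lemma Agree.tribWord_add (h : Agree (bs k) (bs l) r) {s : ℕ} (hs : bs (k + s) + 1 < bs k + r) :
    W (k + s) = W (l + s) := by
  have hs' := h.blockStart_add s (by omega)
  have hmono := blockStart_strictMono.monotone (show k ≤ k + s by omega)
  exact tribWord_eq_of_blockStart_add_one
    (h.tribWord_eq (q := bs (l + s) + 1) (by omega) (by omega) (by omega))

lemma Agree.desubst (h : Agree (bs k) (bs l) r) {n : ℕ}
    (hn : ∀ s < n, bs (k + s) + 1 < bs k + r) : Agree k l n :=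
  fun s hs => h.tribWord_add (hn s hs)

end Desubstitution

section NearSquare

variable {i m : ℕ}

lemma tribWord_add_eq_zero (hm : 2 ≤ m) (hi : W i = 0) (h : Agree i (i + m) (m - 1)) :
    W (i + m) = 0 := by
  simpa [hi] using (h 0 (by omega)).symm

-- Otherwise the letter before the nonzero `W (i + m + (m - 1))` is `0`, which puts the factor
-- `000` at `i + (m - 2)`.
lemma Agree.of_pred (hm : 2 ≤ m) (hi : W i = 0) (h : Agree i (i + m) (m - 1))
    (hx : W (i + (m - 1)) = 0) : Agree i (i + m) m := by
  intro t ht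
  obtain ht | rfl : t < m - 1 ∨ t = m - 1 := by omega
  · exact h t ht
  rw [hx, eq_comm]
  by_contra hy
  obtain ⟨q, hq, hq0⟩ := tribWord_pred_eq_zero hy
  have h2 := h (m - 2) (by omega)
  rw [show i + m + (m - 2) = q by omega, hq0] at h2
  refine not_three_zeros (i + (m - 2)) ⟨h2, ?_, ?_⟩
  · rwa [show i + (m - 2) + 1 = i + (m - 1) by omega]
  · rw [show i + (m - 2) + 2 = i + m by omega]
    exact tribWord_add_eq_zero hm hi h

lemma exists_desubst (hm : 2 ≤ m) (hi : W i = 0) (h : Agree i (i + m) (m - 1)) :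
    ∃ k n, 0 < n ∧ n < m ∧ parikh i m = tribMapParikh (parikh k n) ∧
      Agree k (k + n) (n - 1) ∧
      (Agree i (i + m) m → Agree k (k + n) n ∨ W (k + (n - 1)) = 2) := by
  obtain ⟨k, rfl⟩ := tribWord_eq_zero_iff.mp hi
  obtain ⟨l, hl⟩ := tribWord_eq_zero_iff.mp (tribWord_add_eq_zero hm hi h)
  have hkl : k < l := blockStart_strictMono.lt_iff_lt.mp (by omega)
  obtain ⟨n, rfl⟩ : ∃ n, l = k + n := ⟨l - k, by omega⟩
  refine ⟨k, n, by omega, lt_of_blockStart_add_eq hl hm, ?_, ?_⟩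
  · rw [← parikh_blockStart, hl, Nat.add_sub_cancel_left]
  have hlast : bs (k + (n - 1) + 1) = bs k + (m - 1) + 1 := by
    rw [show k + (n - 1) + 1 = k + n by omega, hl]; omega
  have hlt : ∀ s < n - 1, bs (k + s) < bs (k + (n - 1)) := fun s hs =>
    blockStart_strictMono (by omega)
  by_cases hx : W (bs k + (m - 1)) = 0
  · have hj : bs (k + (n - 1)) = bs k + (m - 1) := blockStart_eq_of_succ_of_eq_zero hlast hx
    have hsq : Agree (bs k) (bs (k + n)) m := by rw [hl]; exact h.of_pred hm hi hx
    refine ⟨hsq.desubst fun s hs => ?_, fun _ => Or.inr ?_⟩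
    · have := hlt s hs; omega
    · have := blockStart_succ (k + (n - 1))
      split_ifs at this with h2
      · exact h2
      · omega
  · have hj : bs (k + (n - 1)) + 1 = bs k + (m - 1) :=
      blockStart_eq_of_succ_of_ne_zero hlast hx
    rw [← hl] at h ⊢
    refine ⟨h.desubst fun s hs => ?_, fun hsq => Or.inl (hsq.desubst fun s hs => ?_)⟩
    · have := hlt s hs; omega
    · have := blockStart_strictMono.monotone (show k + s ≤ k + (n - 1) by omega); omega

-- The witness is `i - 1`: both `W (i - 1)` and `W (i + m - 1)` are `0`.
lemma Agree.exists_pred (hm : 2 ≤ m) (hi : W i ≠ 0) (h : Agree i (i + m) (m - 1)) :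
    ∃ j, W j = 0 ∧ Agree j (j + m) m ∧ parikh j m = parikh i m := by
  obtain ⟨j, rfl, hj⟩ := tribWord_pred_eq_zero hi
  have him : W (j + 1 + m) ≠ 0 := by
    have := h 0 (by omega)
    simp only [add_zero] at this
    rwa [← this]
  obtain ⟨q, hq, hjm⟩ := tribWord_pred_eq_zero him
  have hjm' : W j = W (j + m) := by rw [hj, show j + m = q by omega, hjm]
  refine ⟨j, hj, fun t ht => ?_, parikh_succ_eq_of_tribWord_eq hjm' |>.symm⟩
  obtain rfl | ⟨t, rfl⟩ : t = 0 ∨ ∃ t', t = t' + 1 := by cases t <;> simp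
  · simpa using hjm'
  · simpa only [add_assoc, add_comm 1, add_left_comm 1] using h t (by omega)

lemma isNearSquareVec_parikh_one (i : ℕ) : IsNearSquareVec (parikh i 1) := by
  rw [parikh_one]
  rcases tribWord_cases i with h | h | h <;> rw [h]
  · exact Or.inl ⟨0, Or.inl rfl⟩
  · exact Or.inr (Or.inl rfl)
  · exact Or.inr (Or.inr (Or.inl rfl))

lemma isSquareVec_parikh_one (h : Agree i (i + 1) 1) : IsSquareVec (parikh i 1) := by
  have hi : W i = 0 := by
    by_contra hi
    exact hi ((h 0 one_pos).trans (tribWord_succ_eq_zero hi))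
  rw [parikh_one, hi]
  exact ⟨0, Or.inl rfl⟩

end NearSquare

theorem parikh_of_agree (m : ℕ) (hm : 0 < m) (i : ℕ) :
    (Agree i (i + m) (m - 1) → IsNearSquareVec (parikh i m)) ∧
      (Agree i (i + m) m → IsSquareVec (parikh i m)) := by
  induction m using Nat.strong_induction_on generalizing i with
  | _ m ih =>
  obtain rfl | hm : m = 1 ∨ 2 ≤ m := by omega
  · exact ⟨fun _ => isNearSquareVec_parikh_one i, isSquareVec_parikh_one⟩
  have hzero : ∀ j, W j = 0 → (Agree j (j + m) (m - 1) → IsNearSquareVec (parikh j m)) ∧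
      (Agree j (j + m) m → IsSquareVec (parikh j m)) := by
    intro j hj
    refine ⟨fun h => ?_, fun h => ?_⟩
    · obtain ⟨k, n, hn, hnm, hp, hagree, -⟩ := exists_desubst hm hj h
      exact hp ▸ ((ih n hnm hn k).1 hagree).tribMapParikh
    · obtain ⟨k, n, hn, hnm, hp, hagree, hsq⟩ := exists_desubst hm hj (h.mono (by omega))
      rw [hp]
      rcases hsq h with hsq | h2
      · exact ((ih n hnm hn k).2 hsq).tribMapParikh
      · refine isSquareVec_tribMapParikh_of_ne ((ih n hnm hn k).1 hagree) fun h010 => ?_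
        exact (parikh_snd_snd_pos (show n - 1 < n by omega) h2).ne' (by rw [h010])
  by_cases hi : W i = 0
  · exact hzero i hi
  have hsq : Agree i (i + m) (m - 1) → IsSquareVec (parikh i m) := fun h => by
    obtain ⟨j, hj, hagree, hp⟩ := h.exists_pred hm hi
    exact hp ▸ (hzero j hj).2 hagree
  exact ⟨fun h => (hsq h).isNearSquareVec, fun h => hsq (h.mono (by omega))⟩

end Tribonacci

/-- Every square in the Tribonacci word has order `T_n` or `T_n + T_{n-1}` for some `n ≥ 2`. -/
theorem tribWord_square_orders (i m : ℕ) (hm : 0 < m)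
    (hsq : ∀ t < m, tribWord (i + t) = tribWord (i + m + t)) :
    ∃ n ≥ 2, m = trib n ∨ m = trib n + trib (n - 1) := by
  rw [← Tribonacci.sum_parikh i m]
  exact ((Tribonacci.parikh_of_agree m hm i).2 hsq).exists_trib
end

section
/- The cubes in the infinite Tribonacci word T are exactly of order T_n for n ≥ 5: a cube of order m occurs in T if and only if m = T_n for some n ≥ 5. -/
/-!
Since `T = σ(T)` and `σ` is injective on words over `{0, 1, 2}`, a factor of `T` that begins at
a `0` and is followed by a `0` is the image of a unique factor of `T`. A word of length `3m - 1`
with period `m` starting at a `0` therefore desubstitutes to a word of length `3m' - 1` with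
period `m'`, where `m'` is the number of `0`s in the period, and the period is the image of the
new one. (Cubes are not stable in this way: the block of the last letter of a cube may stick out
of it.) Descending to `m' = 1`, where the period is `0`, shows that the period of such a word is
a permutation of `σ^k(0)`, whence `m = |σ^k(0)| = T_{k+2}`. Orders `1, 2, 4` are excluded by
desubstituting a cube of order `4` to one of order `2` and that to one of order `1`. Conversely
`(σ³(0))³` occurs in `σ⁸(0)`, and its image under `σ^k` is a cube of order `T_{k+5}`.
-/

namespace TribWord

def factor (i n : ℕ) : List ℕ := (List.range n).map fun t => tribWord (i + t)

@[simp] lemma length_factor (i n : ℕ) : (factor i n).length = n := by simp [factor]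

lemma factor_add (i a b : ℕ) : factor i (a + b) = factor i a ++ factor (i + a) b := by
  simp [factor, List.range_add, Nat.add_assoc]

lemma factor_succ (i n : ℕ) : factor i (n + 1) = tribWord i :: factor (i + 1) n := by
  simp [factor, List.range_succ_eq_map, Nat.add_assoc, Nat.add_comm 1]

lemma factor_eq_factor_iff {i i' n : ℕ} :
    factor i n = factor i' n ↔ ∀ t < n, tribWord (i + t) = tribWord (i' + t) := by
  simp [factor, List.map_inj_left]

lemma count_zero_flatMap_tribMap (w : List ℕ) : (w.flatMap tribMap).count 0 = w.length := by
  induction w with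
  | nil => rfl
  | cons c w ih =>
    simp only [List.flatMap_cons, List.count_append, ih, List.length_cons]
    unfold tribMap; split_ifs <;> simp [Nat.add_comm]

lemma count_one_flatMap_tribMap (w : List ℕ) : (w.flatMap tribMap).count 1 = w.count 0 := by
  induction w with
  | nil => rfl
  | cons c w ih =>
    simp only [List.flatMap_cons, List.count_append, ih, List.count_cons]
    unfold tribMap; split_ifs <;> simp_all [Nat.add_comm]

lemma length_flatMap_tribMap (w : List ℕ) :
    (w.flatMap tribMap).length = w.length + w.count 0 + w.count 1 := by
  induction w with
  | nil => rfl
  | cons c w ih =>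
    simp only [List.flatMap_cons, List.length_append, ih, List.count_cons, List.length_cons]
    unfold tribMap; split_ifs <;> simp_all <;> omega

lemma head?_flatMap_tribMap (w : List ℕ) :
    (w.flatMap tribMap).head? = w.head?.map fun _ => 0 := by
  cases w with
  | nil => rfl
  | cons c w => simp only [List.flatMap_cons]; unfold tribMap; split_ifs <;> simp

lemma flatMap_tribMap_injective {x y : List ℕ} (hx : ∀ c ∈ x, c < 3) (hy : ∀ c ∈ y, c < 3)
    (h : x.flatMap tribMap = y.flatMap tribMap) : x = y := by
  induction x generalizing y with
  | nil =>
    have := congrArg List.length h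
    simp only [List.flatMap_nil, List.length_nil, length_flatMap_tribMap] at this
    exact (List.eq_nil_of_length_eq_zero (by omega)).symm
  | cons a x ih =>
    cases y with
    | nil =>
      have := congrArg List.length h
      simp only [List.flatMap_nil, List.length_nil, length_flatMap_tribMap,
        List.length_cons] at this
      omega
    | cons b y =>
      simp only [List.mem_cons, forall_eq_or_imp] at hx hy
      simp only [List.flatMap_cons] at h
      have hab : a = b := by
        have hx' := head?_flatMap_tribMap x
        have hy' := head?_flatMap_tribMap y
        have ha := hx.1; have hb := hy.1
        interval_cases a <;> interval_cases b <;> simp [tribMap] at h <;>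
          first | rfl | (rw [← h] at hy'; simp at hy') | simp [h] at hx'
      subst hab
      rw [ih hx.2 hy.2 (List.append_cancel_left h)]

lemma tribIter_prefix_succ (k : ℕ) : tribIter k <+: tribIter (k + 1) := by
  induction k with
  | zero => exact ⟨[1], rfl⟩
  | succ k ih => exact ih.flatMap tribMap

lemma tribIter_prefix {k k' : ℕ} (h : k ≤ k') : tribIter k <+: tribIter k' := by
  induction k', h using Nat.le_induction with
  | base => exact List.prefix_rfl
  | succ k' _ ih => exact ih.trans (tribIter_prefix_succ k')

lemma tribIter_counts (k : ℕ) : (tribIter k).length = trib (k + 2) ∧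
    (tribIter k).count 0 = trib (k + 1) ∧ (tribIter k).count 1 = trib k := by
  induction k with
  | zero => exact ⟨rfl, rfl, rfl⟩
  | succ k ih =>
    obtain ⟨hl, h0, h1⟩ := ih
    refine ⟨?_, ?_, ?_⟩
    · rw [tribIter, length_flatMap_tribMap, hl, h0, h1]; rfl
    · rw [tribIter, count_zero_flatMap_tribMap, hl]
    · rw [tribIter, count_one_flatMap_tribMap, h0]

lemma length_tribIter (k : ℕ) : (tribIter k).length = trib (k + 2) := (tribIter_counts k).1

lemma lt_trib_add_two (k : ℕ) : k < trib (k + 2) := by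
  suffices ∀ k, k < trib (k + 2) ∧ 0 < trib (k + 1) from (this k).1
  intro k
  induction k with
  | zero => exact ⟨Nat.one_pos, Nat.one_pos⟩
  | succ k ih => exact ⟨by rw [trib]; omega, Nat.zero_lt_of_lt ih.1⟩

lemma lt_length_tribIter_succ (n : ℕ) : n < (tribIter (n + 1)).length := by
  rw [length_tribIter]; have := lt_trib_add_two (n + 1); omega

lemma tribWord_eq_getD {K n : ℕ} (h : n < (tribIter K).length) :
    tribWord n = (tribIter K).getD n 0 := by
  have hn := lt_length_tribIter_succ n
  rw [tribWord, List.getD_eq_getElem _ _ h, List.getD_eq_getElem _ _ hn]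
  rcases le_total K (n + 1) with hK | hK
  · exact ((tribIter_prefix hK).getElem h).symm
  · exact (tribIter_prefix hK).getElem hn

lemma factor_zero_eq_take {K n : ℕ} (h : n ≤ (tribIter K).length) :
    factor 0 n = (tribIter K).take n := by
  refine List.ext_getElem (by simp [h]) fun t ht _ => ?_
  simp only [factor, List.getElem_map, List.getElem_range, List.getElem_take, Nat.zero_add]
  rw [tribWord_eq_getD (K := K) (by simp at ht; omega), List.getD_eq_getElem]

lemma tribWord_lt_three (n : ℕ) : tribWord n < 3 := by
  have mem : ∀ k, ∀ c ∈ tribIter k, c < 3 := by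
    intro k
    induction k with
    | zero => simp [tribIter]
    | succ k ih =>
      simp only [tribIter, List.mem_flatMap, forall_exists_index, and_imp]
      intro c a _ hc
      unfold tribMap at hc
      split_ifs at hc <;> simp at hc <;> omega
  have hn := lt_length_tribIter_succ n
  rw [tribWord, List.getD_eq_getElem _ _ hn]
  exact mem _ _ (List.getElem_mem hn)

lemma exists_factor_eq_of_infix {w : List ℕ} {K : ℕ} (h : w <:+: tribIter K) :
    ∃ i, factor i w.length = w := by
  obtain ⟨s, t, hst⟩ := h
  refine ⟨s.length, List.ext_getElem (length_factor _ _) fun r hr hrw => ?_⟩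
  simp only [factor, List.getElem_map, List.getElem_range]
  rw [tribWord_eq_getD (K := K) (by rw [← hst]; simp at hr ⊢; omega), ← hst,
    List.getD_eq_getElem?_getD, List.append_assoc, List.getElem?_append_right (by omega)]
  simp [List.getElem?_append_left (by simpa using hr), List.getElem?_eq_getElem hrw]

lemma tribWord_add_eq_getD {i n t : ℕ} {w : List ℕ} (h : factor i n = w) (ht : t < n) :
    tribWord (i + t) = w.getD t 0 := by
  simp [← h, factor, ht]

/-- As `T = σ(T)`, the block `σ(T j)` occupies the positions `[blockStart j, blockStart (j + 1))`
of `T`. -/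
def blockStart (j : ℕ) : ℕ := ((factor 0 j).flatMap tribMap).length

lemma blockStart_add (j n : ℕ) :
    blockStart (j + n) = blockStart j + ((factor j n).flatMap tribMap).length := by
  simp [blockStart, factor_add, List.flatMap_append]

lemma factor_zero_blockStart (j : ℕ) :
    factor 0 (blockStart j) = (factor 0 j).flatMap tribMap := by
  have hj := (lt_length_tribIter_succ j).le
  have hpre : (factor 0 j).flatMap tribMap <+: tribIter (j + 2) := by
    rw [factor_zero_eq_take hj]; exact (List.take_prefix _ _).flatMap tribMap
  rw [blockStart, factor_zero_eq_take hpre.length_le, ← List.prefix_iff_eq_take.mp hpre]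

lemma factor_blockStart {j n L : ℕ} (hL : blockStart (j + n) = blockStart j + L) :
    factor (blockStart j) L = (factor j n).flatMap tribMap := by
  have h := factor_zero_blockStart (j + n)
  rw [hL, factor_add, factor_add, List.flatMap_append, ← factor_zero_blockStart, Nat.zero_add,
    Nat.zero_add] at h
  exact List.append_cancel_left h

lemma blockStart_succ (j : ℕ) :
    blockStart (j + 1) = blockStart j + (tribMap (tribWord j)).length := by
  simp [blockStart_add, factor]

lemma factor_blockStart_tribMap (j : ℕ) :
    factor (blockStart j) (tribMap (tribWord j)).length = tribMap (tribWord j) := by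
  rw [factor_blockStart (blockStart_succ j)]
  simp [factor]

lemma tribWord_blockStart (j : ℕ) : tribWord (blockStart j) = 0 := by
  have h := tribWord_add_eq_getD (factor_blockStart_tribMap j) (t := 0)
  unfold tribMap at h; split_ifs at h <;> simpa using h

lemma blockStart_succ_cases (j : ℕ) :
    (blockStart (j + 1) = blockStart j + 1 ∧ tribWord j = 2) ∨
      (blockStart (j + 1) = blockStart j + 2 ∧ tribWord (blockStart j + 1) ≠ 0) := by
  have h := tribWord_add_eq_getD (factor_blockStart_tribMap j) (t := 1)
  rw [blockStart_succ]
  have := tribWord_lt_three j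
  interval_cases hj : tribWord j <;> simp_all [tribMap]

lemma blockStart_strictMono : StrictMono blockStart :=
  strictMono_nat_of_lt_succ fun j => by rcases blockStart_succ_cases j with h | h <;> omega

lemma exists_blockStart_le_lt (p : ℕ) : ∃ j, blockStart j ≤ p ∧ p < blockStart (j + 1) := by
  induction p with
  | zero => exact ⟨0, Nat.zero_le _, blockStart_strictMono.lt_iff_lt.mpr Nat.zero_lt_one⟩
  | succ p ih =>
    obtain ⟨j, hjp, hpj⟩ := ih
    rcases (Nat.succ_le_of_lt hpj).lt_or_eq with h | h
    · exact ⟨j, by omega, h⟩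
    · have := blockStart_strictMono (Nat.lt_add_one (j + 1))
      exact ⟨j + 1, h.ge, by omega⟩

lemma exists_blockStart_eq_or (p : ℕ) :
    ∃ j, blockStart j = p ∨
      (blockStart j + 1 = p ∧ blockStart (j + 1) = p + 1 ∧ tribWord p ≠ 0) := by
  obtain ⟨j, hjp, hpj⟩ := exists_blockStart_le_lt p
  refine ⟨j, ?_⟩
  rcases blockStart_succ_cases j with h | h
  · left; omega
  · rcases hjp.eq_or_lt with h' | h'
    · exact Or.inl h'
    · right; refine ⟨by omega, by omega, ?_⟩
      rw [show p = blockStart j + 1 by omega]; exact h.2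

lemma tribWord_eq_zero_iff {p : ℕ} : tribWord p = 0 ↔ ∃ j, blockStart j = p := by
  refine ⟨fun hp => ?_, fun ⟨j, hj⟩ => hj ▸ tribWord_blockStart j⟩
  obtain ⟨j, h | h⟩ := exists_blockStart_eq_or p
  · exact ⟨j, h⟩
  · exact absurd hp h.2.2

lemma tribWord_succ_eq_zero {p : ℕ} (h : tribWord p ≠ 0) : tribWord (p + 1) = 0 := by
  obtain ⟨j, h' | h'⟩ := exists_blockStart_eq_or p
  · exact absurd (h' ▸ tribWord_blockStart j) h
  · exact h'.2.1 ▸ tribWord_blockStart (j + 1)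

lemma tribWord_eq_zero_of_succ {p : ℕ} (h : tribWord (p + 1) ≠ 0) : tribWord p = 0 := by
  obtain ⟨j, h' | h'⟩ := exists_blockStart_eq_or (p + 1)
  · exact absurd (h' ▸ tribWord_blockStart j) h
  · exact (Nat.succ_injective h'.1) ▸ tribWord_blockStart j

lemma tribWord_add_two_ne_zero {p : ℕ} (h0 : tribWord p = 0) (h1 : tribWord (p + 1) = 0) :
    tribWord (p + 2) ≠ 0 := by
  obtain ⟨j, rfl⟩ := tribWord_eq_zero_iff.mp h0
  have step : ∀ k, tribWord (blockStart k + 1) = 0 →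
      blockStart (k + 1) = blockStart k + 1 ∧ tribWord k ≠ 0 := fun k hk => by
    rcases blockStart_succ_cases k with h | h
    · exact ⟨h.1, by omega⟩
    · exact absurd hk h.2
  obtain ⟨hj, hj0⟩ := step j h1
  intro h2
  obtain ⟨-, hj1⟩ := step (j + 1) (by rw [hj]; exact h2)
  exact hj1 (tribWord_succ_eq_zero hj0)

lemma exists_blockStart_add_eq {j p : ℕ} (hjp : blockStart j ≤ p) (hp : tribWord p = 0) :
    ∃ n, blockStart (j + n) = p := by
  obtain ⟨k, rfl⟩ := tribWord_eq_zero_iff.mp hp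
  exact ⟨k - j, by rw [Nat.add_sub_cancel' (blockStart_strictMono.le_iff_le.mp hjp)]⟩

lemma lt_three_of_mem_factor {i n c : ℕ} (h : c ∈ factor i n) : c < 3 := by
  simp only [factor, List.mem_map] at h
  obtain ⟨t, -, rfl⟩ := h
  exact tribWord_lt_three _

lemma factor_eq_of_blockStart {j j' n L : ℕ} (hL : blockStart (j + n) = blockStart j + L)
    (hz : tribWord (blockStart j' + L) = 0)
    (h : factor (blockStart j) L = factor (blockStart j') L) :
    blockStart (j' + n) = blockStart j' + L ∧ factor j n = factor j' n := by
  obtain ⟨n', hn'⟩ := exists_blockStart_add_eq (Nat.le_add_right _ L) hz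
  have key : factor j n = factor j' n' :=
    flatMap_tribMap_injective (fun _ => lt_three_of_mem_factor) (fun _ => lt_three_of_mem_factor)
      (by rw [← factor_blockStart hL, ← factor_blockStart hn', h])
  obtain rfl : n = n' := by simpa using congrArg List.length key
  exact ⟨hn', key⟩

def HasPeriod (m i L : ℕ) : Prop := ∀ t < L, tribWord (i + t) = tribWord (i + m + t)

lemma hasPeriod_iff_factor_eq {m i L : ℕ} : HasPeriod m i L ↔ factor i L = factor (i + m) L :=
  factor_eq_factor_iff.symm

lemma HasPeriod.mono {m i L L' : ℕ} (h : HasPeriod m i L) (hL : L' ≤ L) : HasPeriod m i L' :=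
  fun t ht => h t (by omega)

lemma HasPeriod.desubstitute {m j n l L : ℕ} (h : HasPeriod m (blockStart j) L)
    (hn : blockStart (j + n) = blockStart j + m) (hl : blockStart (j + l) = blockStart j + L)
    (hz : tribWord (blockStart j + m + L) = 0) :
    HasPeriod n j l ∧ blockStart (j + n + l) = blockStart j + m + L := by
  rw [hasPeriod_iff_factor_eq, ← hn] at h
  obtain ⟨h₁, h₂⟩ := factor_eq_of_blockStart hl (by rwa [hn]) h
  exact ⟨hasPeriod_iff_factor_eq.mpr h₂, by rw [h₁, hn]⟩

lemma HasPeriod.exists_aligned {m i L : ℕ} (h : HasPeriod m i L) (hL : 0 < L) :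
    ∃ i', tribWord i' = 0 ∧ HasPeriod m i' L ∧ (factor i' m).Perm (factor i m) := by
  by_cases hi : tribWord i = 0
  · exact ⟨i, hi, h, List.Perm.refl _⟩
  obtain ⟨i, rfl⟩ : ∃ i', i = i' + 1 :=
    Nat.exists_eq_succ_of_ne_zero fun h0 => hi (by subst h0; exact tribWord_blockStart 0)
  have h0 := h 0 hL
  have him : tribWord (i + m) = 0 :=
    tribWord_eq_zero_of_succ (by rw [show i + m + 1 = i + 1 + m + 0 by omega, ← h0]; exact hi)
  refine ⟨i, tribWord_eq_zero_of_succ hi, fun t ht => ?_, ?_⟩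
  · cases t with
    | zero => rw [Nat.add_zero, Nat.add_zero, him, tribWord_eq_zero_of_succ hi]
    | succ t =>
      rw [show i + (t + 1) = i + 1 + t by omega, show i + m + (t + 1) = i + 1 + m + t by omega]
      exact h t (by omega)
  · cases m with
    | zero => simp [factor]
    | succ m =>
      have hlast : factor (i + 1 + m) 1 = [0] := by
        rw [show i + 1 + m = i + (m + 1) by omega]; simp [factor, him]
      rw [factor_succ, factor_add (i + 1) m 1, hlast, tribWord_eq_zero_of_succ hi]
      exact (List.perm_append_singleton 0 _).symm

lemma HasPeriod.count_zero_factor_lt {m i L : ℕ} (h : HasPeriod m i L) (hm : 2 ≤ m)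
    (hL : 3 ≤ m + L) : (factor i m).count 0 < m := by
  obtain ⟨t, ht, hne⟩ : ∃ t < 3, tribWord (i + t) ≠ 0 := by
    by_contra! hz
    exact tribWord_add_two_ne_zero (hz 0 (by omega)) (hz 1 (by omega)) (hz 2 (by omega))
  have hmem : ∃ s < m, tribWord (i + s) = tribWord (i + t) := by
    rcases lt_or_ge t m with hlt | hge
    · exact ⟨t, hlt, rfl⟩
    · refine ⟨t - m, by omega, ?_⟩
      rw [h (t - m) (by omega), show i + m + (t - m) = i + t by omega]
  obtain ⟨s, hs, hst⟩ := hmem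
  simpa [factor] using List.count_lt_length_iff.mpr
    ⟨_, List.mem_map.mpr ⟨s, List.mem_range.mpr hs, rfl⟩, hst ▸ hne⟩

-- For `p = i + 2m - 1` the period says nothing about `T (p + m)`; there the letter before
-- `T p = T (p + 1) = 0` is nonzero, and so is its copy, which is followed by `0`.
lemma HasPeriod.tribWord_add_eq_zero {m i p : ℕ} (h : HasPeriod m i (2 * m - 1)) (hip : i ≤ p)
    (hp : p < i + 2 * m) (hz : tribWord (i + 2 * m) = 0) (hp₀ : tribWord p = 0) :
    tribWord (p + m) = 0 := by
  rcases (show p + 1 < i + 2 * m ∨ p + 1 = i + 2 * m by omega) with hlt | heq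
  · rw [← hp₀, show p + m = i + m + (p - i) by omega, ← h (p - i) (by omega)]
    congr 1; omega
  · have hprev : tribWord (p - 1) ≠ 0 := fun h₀ =>
      tribWord_add_two_ne_zero h₀ (by rwa [show p - 1 + 1 = p by omega])
        (by rwa [show p - 1 + 2 = i + 2 * m by omega])
    rw [show p - 1 = i + (p - 1 - i) by omega, h (p - 1 - i) (by omega)] at hprev
    rw [← tribWord_succ_eq_zero hprev]
    congr 1; omega

lemma HasPeriod.exists_desubstitute_nearCube {m i : ℕ} (h : HasPeriod m i (2 * m - 1))
    (hm : 2 ≤ m) (hi : tribWord i = 0) :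
    ∃ j n, HasPeriod n j (2 * n - 1) ∧ factor i m = (factor j n).flatMap tribMap := by
  obtain ⟨j, rfl⟩ := tribWord_eq_zero_iff.mp hi
  set i := blockStart j
  have hz₁ : tribWord (i + m) = 0 := by simpa [hi] using (h 0 (by omega)).symm
  have hz₂ : tribWord (i + m + m) = 0 := by rw [← h m (by omega), hz₁]
  obtain ⟨n, hn⟩ := exists_blockStart_add_eq (Nat.le_add_right i m) hz₁
  obtain ⟨-, h2n⟩ := (h.mono (by omega)).desubstitute hn hn hz₂
  have hn₀ : 0 < n := Nat.pos_of_ne_zero fun h0 => by subst h0; simp at hn; omega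
  -- `p` starts the last block of the second period, whose copy may stick out of the near-cube.
  set p := blockStart (j + (2 * n - 1))
  have hp₁ : i + m ≤ p := hn ▸ blockStart_strictMono.monotone (by omega)
  have hp₂ : p < i + 2 * m := by
    have := blockStart_strictMono (show j + (2 * n - 1) < j + n + n by omega)
    omega
  have hzp : tribWord (i + m + (p - i)) = 0 := by
    rw [show i + m + (p - i) = p + m by omega]
    exact h.tribWord_add_eq_zero (by omega) (by omega) (by rwa [two_mul, ← add_assoc])
      (tribWord_blockStart _)
  obtain ⟨hper, -⟩ := (h.mono (show p - i ≤ 2 * m - 1 by omega)).desubstitute hn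
    (show blockStart (j + (2 * n - 1)) = i + (p - i) by omega) hzp
  exact ⟨j, n, hper, factor_blockStart hn⟩

lemma HasPeriod.exists_desubstitute_cube {m i : ℕ} (h : HasPeriod m i (2 * m)) (hm : 0 < m)
    (hi : tribWord i = 0) (hlast : tribWord (i + m - 1) ≠ 0) :
    ∃ j, HasPeriod ((factor i m).count 0) j (2 * (factor i m).count 0) := by
  obtain ⟨j, rfl⟩ := tribWord_eq_zero_iff.mp hi
  set i := blockStart j
  have hz₁ : tribWord (i + m) = 0 := by simpa [hi] using (h 0 (by omega)).symm
  have hz₂ : tribWord (i + m + m) = 0 := by rw [← h m (by omega), hz₁]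
  have hz₃ : tribWord (i + m + 2 * m) = 0 := by
    have h₁ := h (m - 1) (by omega)
    have h₂ := h (2 * m - 1) (by omega)
    rw [show i + (m - 1) = i + m - 1 by omega] at h₁
    rw [show i + (2 * m - 1) = i + m + (m - 1) by omega, ← h₁] at h₂
    have := tribWord_succ_eq_zero (h₂ ▸ hlast)
    rwa [show i + m + (2 * m - 1) + 1 = i + m + 2 * m by omega] at this
  obtain ⟨n, hn⟩ := exists_blockStart_add_eq (Nat.le_add_right i m) hz₁
  obtain ⟨-, h2n⟩ := (h.mono (by omega)).desubstitute hn hn hz₂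
  obtain ⟨hper, -⟩ := h.desubstitute hn (l := 2 * n)
    (by rw [two_mul, two_mul, ← add_assoc, h2n, add_assoc]) hz₃
  exact ⟨j, by rwa [factor_blockStart hn, count_zero_flatMap_tribMap, length_factor]⟩

theorem HasPeriod.exists_perm_tribIter {m i : ℕ} (h : HasPeriod m i (2 * m - 1)) (hm : 0 < m) :
    ∃ k, (factor i m).Perm (tribIter k) := by
  induction m using Nat.strong_induction_on generalizing i with
  | _ m ih =>
  rcases (show m = 1 ∨ 2 ≤ m by omega) with rfl | hm₂
  · have hi : tribWord i = 0 := by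
      by_contra hi
      exact hi ((h 0 Nat.one_pos).trans (tribWord_succ_eq_zero hi))
    exact ⟨0, by simp [factor, tribIter, hi]⟩
  obtain ⟨i', hi', h', hperm⟩ := h.exists_aligned (by omega)
  obtain ⟨j, n, hjn, hfac⟩ := h'.exists_desubstitute_nearCube hm₂ hi'
  have hnm : n < m := by
    have := h'.count_zero_factor_lt hm₂ (by omega)
    rwa [hfac, count_zero_flatMap_tribMap, length_factor] at this
  have hn₀ : 0 < n := Nat.pos_of_ne_zero fun h0 => by
    have := congrArg List.length hfac
    simp [h0, factor] at this
    omega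
  obtain ⟨k, hk⟩ := ih n hnm hjn hn₀
  exact ⟨k + 1, hperm.symm.trans (hfac ▸ hk.flatMap_right tribMap)⟩

lemma not_hasPeriod_one (i : ℕ) : ¬ HasPeriod 1 i 2 := by
  intro h
  have h₀ : tribWord i = tribWord (i + 1) := h 0 (by omega)
  have h₁ : tribWord (i + 1) = tribWord (i + 2) := h 1 (by omega)
  by_cases hi : tribWord i = 0
  · exact tribWord_add_two_ne_zero hi (h₀ ▸ hi) (h₁ ▸ h₀ ▸ hi)
  · exact hi (h₀.trans (tribWord_succ_eq_zero hi))

lemma not_hasPeriod_two (i : ℕ) : ¬ HasPeriod 2 i 4 := by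
  intro h
  obtain ⟨i, hi, h, -⟩ := h.exists_aligned (by omega)
  have h₁ : tribWord (i + 1) ≠ 0 := fun h₁ =>
    tribWord_add_two_ne_zero hi h₁ (by rw [← hi]; exact (h 0 (by omega)).symm)
  obtain ⟨j, hj⟩ := h.exists_desubstitute_cube (by omega) hi h₁
  have hcount : (factor i 2).count 0 = 1 := by simp [factor, List.range_succ, hi, h₁]
  rw [hcount] at hj
  exact not_hasPeriod_one j hj

lemma not_hasPeriod_four (i : ℕ) : ¬ HasPeriod 4 i 8 := by
  intro h
  obtain ⟨i, hi, h, -⟩ := h.exists_aligned (by omega)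
  have h₄ : tribWord (i + 4) = 0 := by rw [← hi]; exact (h 0 (by omega)).symm
  have h₁ : tribWord (i + 1) ≠ 0 := fun h₁ => by
    have h₃ := tribWord_succ_eq_zero (tribWord_add_two_ne_zero hi h₁)
    exact tribWord_add_two_ne_zero h₃ h₄ (by rw [← h₁]; exact (h 1 (by omega)).symm)
  have h₂ : tribWord (i + 2) = 0 := tribWord_succ_eq_zero h₁
  have h₃ : tribWord (i + 3) ≠ 0 := fun h₃ => tribWord_add_two_ne_zero h₂ h₃ h₄
  obtain ⟨j, hj⟩ := h.exists_desubstitute_cube (by omega) hi h₃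
  have hcount : (factor i 4).count 0 = 2 := by simp [factor, List.range_succ, hi, h₁, h₂, h₃]
  rw [hcount] at hj
  exact not_hasPeriod_two j hj

lemma exists_hasPeriod_length_tribIter (k : ℕ) :
    ∃ i, HasPeriod (tribIter (k + 3)).length i (2 * (tribIter (k + 3)).length) := by
  have hinf : ∀ k, tribIter (k + 3) ++ tribIter (k + 3) ++ tribIter (k + 3) <:+:
      tribIter (k + 8) := by
    intro k
    induction k with
    | zero => decide
    | succ k ih => simpa [tribIter, List.flatMap_append] using ih.flatMap tribMap
  obtain ⟨i, hi⟩ := exists_factor_eq_of_infix (hinf k)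
  generalize tribIter (k + 3) = u at hi ⊢
  rw [List.length_append, List.length_append] at hi
  have hfirst : factor i (u.length + u.length) = u ++ u := by
    rw [factor_add] at hi
    exact (List.append_inj hi (by simp)).1
  have hlast : factor (i + u.length) (u.length + u.length) = u ++ u := by
    rw [Nat.add_assoc, factor_add, List.append_assoc] at hi
    exact (List.append_inj hi (by simp)).2
  exact ⟨i, hasPeriod_iff_factor_eq.mpr (by rw [two_mul, hfirst, hlast])⟩

end TribWord

open TribWord

/-- The cubes in the Tribonacci word are exactly those of order `T_n` for `n ≥ 5`. -/
theorem tribWord_cube_orders (m : ℕ) (hm : 0 < m) :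
    (∃ i, ∀ t < 2 * m, tribWord (i + t) = tribWord (i + m + t)) ↔
      ∃ n ≥ 5, m = trib n := by
  constructor
  · rintro ⟨i, hi⟩
    have hcube : HasPeriod m i (2 * m) := hi
    obtain ⟨k, hk⟩ := (hcube.mono (Nat.sub_le _ 1)).exists_perm_tribIter hm
    have hmk : m = trib (k + 2) := by rw [← length_tribIter, ← hk.length_eq, length_factor]
    obtain _ | _ | _ | k := k <;> subst hmk
    · exact absurd hcube (not_hasPeriod_one i)
    · exact absurd hcube (not_hasPeriod_two i)
    · exact absurd hcube (not_hasPeriod_four i)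
    · exact ⟨k + 5, by omega, rfl⟩
  · rintro ⟨n, hn, rfl⟩
    obtain ⟨k, rfl⟩ : ∃ k, n = k + 5 := ⟨n - 5, by omega⟩
    rw [← length_tribIter]
    exact exists_hasPeriod_length_tribIter k
end

section
/- For every n ≥ 0 there exists a palindromic factor of length n in the infinite Tribonacci word T. -/
namespace List

variable {α : Type*}

theorem flatMap_append_singleton_eq_cons {σ : α → List α} {x : α}
    (hσ : ∀ c, σ c ++ [x] = x :: (σ c).reverse) (w : List α) :
    w.flatMap σ ++ [x] = x :: w.flatMap (reverse ∘ σ) := by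
  induction w with
  | nil => rfl
  | cons c w ih =>
    rw [flatMap_cons, append_assoc, ih, ← singleton_append, ← append_assoc, hσ]
    rfl

theorem Palindrome.flatMap_append_singleton {σ : α → List α} {x : α}
    (hσ : ∀ c, (σ c ++ [x]).Palindrome) {w : List α} (hw : w.Palindrome) :
    (w.flatMap σ ++ [x]).Palindrome := by
  have hσ' : ∀ c, σ c ++ [x] = x :: (σ c).reverse := fun c => by
    simpa using ((hσ c).reverse_eq).symm
  refine .of_reverse_eq ?_
  rw [reverse_append, reverse_flatMap, hw.reverse_eq, flatMap_append_singleton_eq_cons hσ']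
  rfl

theorem Palindrome.getElem_eq {l : List α} (hl : l.Palindrome) {i : ℕ} (hi : i < l.length) :
    l[i] = l[l.length - 1 - i] := by
  have hi' : i < l.reverse.length := by rwa [length_reverse]
  rw [← getElem_reverse hi']
  simp only [hl.reverse_eq]

end List

open List

theorem tribMap_eq_cons (c : ℕ) : ∃ x, tribMap c = 0 :: x := by
  unfold tribMap
  split_ifs <;> exact ⟨_, rfl⟩

theorem tribMap_append_zero_palindrome (c : ℕ) : (tribMap c ++ [0]).Palindrome := by
  unfold tribMap
  split_ifs <;> exact .of_reverse_eq rfl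

theorem flatMap_tribMap_ne_nil {w : List ℕ} (hw : w ≠ []) : w.flatMap tribMap ≠ [] := by
  obtain ⟨c, hc⟩ := exists_mem_of_ne_nil w hw
  obtain ⟨x, hx⟩ := tribMap_eq_cons c
  rw [Ne, flatMap_eq_nil_iff]
  exact fun h => by simpa [hx] using h c hc

theorem tribIter_succ (k : ℕ) : tribIter (k + 1) = (tribIter k).flatMap tribMap := rfl

theorem exists_tribIter_succ_eq_append (m : ℕ) :
    ∃ s ≠ [], tribIter m ++ s = tribIter (m + 1) := by
  induction m with
  | zero => exact ⟨[1], by simp, rfl⟩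
  | succ m ih =>
    obtain ⟨s, hs, hts⟩ := ih
    exact ⟨s.flatMap tribMap, flatMap_tribMap_ne_nil hs,
      by rw [tribIter_succ, tribIter_succ (m + 1), ← hts, flatMap_append]⟩

theorem tribIter_prefix_tribIter {a b : ℕ} (h : a ≤ b) : tribIter a <+: tribIter b := by
  induction b, h using Nat.le_induction with
  | base => exact prefix_rfl
  | succ b _ ih =>
    obtain ⟨s, -, hs⟩ := exists_tribIter_succ_eq_append b
    exact ih.trans ⟨s, hs⟩

theorem lt_length_tribIter (m : ℕ) : m < (tribIter m).length := by
  induction m with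
  | zero => simp [tribIter]
  | succ m ih =>
    obtain ⟨s, hs, hts⟩ := exists_tribIter_succ_eq_append m
    rw [← hts, length_append]
    have := length_pos_iff.mpr hs
    omega

theorem tribWord_eq_getElem_of_prefix {w : List ℕ} {m p : ℕ} (h : w <+: tribIter m)
    (hp : p < w.length) : tribWord p = w[p] := by
  have hp' : p < (tribIter (p + 1)).length := by have := lt_length_tribIter (p + 1); omega
  have hM : tribIter (p + 1) <+: tribIter (m + p + 1) := tribIter_prefix_tribIter (by omega)
  have hwM : w <+: tribIter (m + p + 1) := h.trans (tribIter_prefix_tribIter (by omega))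
  rw [tribWord, getD_eq_getElem _ _ hp', hM.getElem hp', hwM.getElem hp]

/-- `w` extends to a prefix `w a` of `tribIter (m + 1)`, whose image `φ(w) φ(a)` is a prefix of
`tribIter (m + 2)`, and `φ(a)` starts with `0`. -/
theorem flatMap_tribMap_append_zero_prefix {w : List ℕ} {m : ℕ} (h : w <+: tribIter m) :
    w.flatMap tribMap ++ [0] <+: tribIter (m + 2) := by
  obtain ⟨u, hu⟩ := h
  obtain ⟨s, hs, hts⟩ := exists_tribIter_succ_eq_append m
  obtain ⟨a, r, har⟩ := exists_cons_of_ne_nil (append_ne_nil_of_right_ne_nil u hs)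
  obtain ⟨x, hx⟩ := tribMap_eq_cons a
  refine ⟨x ++ r.flatMap tribMap, ?_⟩
  rw [tribIter_succ (m + 1), ← hts, ← hu, append_assoc w u s, har, flatMap_append, flatMap_cons,
    hx]
  simp

/-- The palindromic prefixes `P_k` of the Tribonacci word. -/
def tribPal : ℕ → List ℕ
  | 0 => []
  | k + 1 => (tribPal k).flatMap tribMap ++ [0]

theorem tribPal_palindrome (k : ℕ) : (tribPal k).Palindrome := by
  induction k with
  | zero => exact .nil
  | succ k ih => exact ih.flatMap_append_singleton tribMap_append_zero_palindrome

theorem tribPal_prefix_tribIter (k : ℕ) : tribPal k <+: tribIter (2 * k) := by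
  induction k with
  | zero => exact nil_prefix
  | succ k ih => exact flatMap_tribMap_append_zero_prefix ih

theorem tribPal_succ (k : ℕ) : tribPal (k + 1) = tribIter k ++ tribPal k := by
  induction k with
  | zero => rfl
  | succ k ih =>
    rw [tribPal, ih, flatMap_append, append_assoc, ← ih]
    rfl

theorem le_length_tribPal (k : ℕ) : k ≤ (tribPal k).length := by
  induction k with
  | zero => simp
  | succ k ih =>
    rw [tribPal_succ, length_append]
    have := lt_length_tribIter k
    omega

theorem tribIter_add_three (k : ℕ) :
    tribIter (k + 3) = tribIter (k + 2) ++ tribIter (k + 1) ++ tribIter k := by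
  induction k with
  | zero => rfl
  | succ k ih =>
    have h := congrArg (flatMap tribMap) ih
    rwa [flatMap_append, flatMap_append] at h

theorem length_tribIter : ∀ k, (tribIter k).length = trib (k + 2)
  | 0 => rfl
  | 1 => rfl
  | 2 => rfl
  | k + 3 => by
    rw [tribIter_add_three, length_append, length_append, length_tribIter k,
      length_tribIter (k + 1), length_tribIter (k + 2)]
    rfl

theorem trib_add_four_mod_two (n : ℕ) : trib (n + 4) % 2 = trib n % 2 := by
  have h₄ : trib (n + 4) = trib (n + 3) + trib (n + 2) + trib (n + 1) := rfl
  have h₃ : trib (n + 3) = trib (n + 2) + trib (n + 1) + trib n := rfl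
  omega

theorem trib_four_mul_add_two_mod_two (m : ℕ) : trib (4 * m + 2) % 2 = 1 := by
  induction m with
  | zero => rfl
  | succ m ih => rwa [show 4 * (m + 1) + 2 = 4 * m + 2 + 4 by ring, trib_add_four_mod_two]

theorem exists_tribPal_length_ge_and_mod_two_eq (n : ℕ) :
    ∃ k, n ≤ (tribPal k).length ∧ (tribPal k).length % 2 = n % 2 := by
  have hlen : (tribPal (4 * n + 1)).length = trib (4 * n + 2) + (tribPal (4 * n)).length := by
    rw [tribPal_succ, length_append, length_tribIter]
  have hodd := trib_four_mul_add_two_mod_two n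
  have h₀ := le_length_tribPal (4 * n)
  by_cases hpar : (tribPal (4 * n)).length % 2 = n % 2
  · exact ⟨4 * n, by omega, hpar⟩
  · exact ⟨4 * n + 1, by omega, by omega⟩

/-- The Tribonacci word contains palindromic factors of every length. -/
theorem tribWord_palindromes_every_length (n : ℕ) :
    ∃ i, ∀ j < n, tribWord (i + j) = tribWord (i + n - 1 - j) := by
  obtain ⟨k, hnk, hpar⟩ := exists_tribPal_length_ge_and_mod_two_eq n
  have hpal := tribPal_palindrome k
  have hprefix := tribPal_prefix_tribIter k
  generalize tribPal k = P at hnk hpar hpal hprefix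
  refine ⟨(P.length - n) / 2, fun j hj => ?_⟩
  have hij : (P.length - n) / 2 + j < P.length := by omega
  have hmirror : P.length - 1 - ((P.length - n) / 2 + j) = (P.length - n) / 2 + n - 1 - j := by
    omega
  rw [tribWord_eq_getElem_of_prefix hprefix hij, hpal.getElem_eq hij,
    tribWord_eq_getElem_of_prefix hprefix (by omega)]
  simp only [hmirror]
end
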